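/- arXiv:2210.11864 — 9 statements merged into one kernel-verified Lean document; each statement's English description precedes it below -/
import Mathlib

section
/- For all integers t and k with 1 ≤ k and 3k ≤ 2t + 1: Σ_{j=0}^{k−1} C(2t+1−3k, t−1−3j) · C(2k, 1+2j) ≤ 2 · C(2t−2, t−1). -/
/-- Super-multiplicativity of binomial coefficients (a single term of Vandermonde). -/
lemma choose_mul_choose_le_aux (m n a b : ℕ) :
    Nat.choose m a * Nat.choose n b ≤ Nat.choose (m + n) (a + b) := by
  rw [Nat.add_choose_eq]
  exact Finset.single_le_sum (f := fun ij => Nat.choose m ij.1 * Nat.choose n ij.2)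
    (fun _ _ => Nat.zero_le _)
    (show ((a, b) : ℕ × ℕ) ∈ Finset.HasAntidiagonal.antidiagonal (a + b) from Finset.HasAntidiagonal.mem_antidiagonal.2 rfl)

/-- For `2 ≤ k` and `1 ≤ j < k`: `C(2k, 1+2j) ≤ C(3k-2, 3j)`. -/
lemma aux_j_pos (k j : ℕ) (hk : 2 ≤ k) (hj : 1 ≤ j) (hjk : j < k) :
    Nat.choose (2 * k) (1 + 2 * j) ≤ Nat.choose (3 * k - 2) (3 * j) := by
  have h1 : 3 * k - 2 = 2 * k + (k - 2) := by omega
  have h2 : 3 * j = (1 + 2 * j) + (j - 1) := by omega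
  have hpos : 0 < Nat.choose (k - 2) (j - 1) := Nat.choose_pos (by omega)
  calc Nat.choose (2 * k) (1 + 2 * j)
      ≤ Nat.choose (2 * k) (1 + 2 * j) * Nat.choose (k - 2) (j - 1) :=
        Nat.le_mul_of_pos_right _ hpos
    _ ≤ Nat.choose (2 * k + (k - 2)) ((1 + 2 * j) + (j - 1)) :=
        choose_mul_choose_le_aux _ _ _ _
    _ = Nat.choose (3 * k - 2) (3 * j) := by rw [h1, h2]

/-- The `j = 0` term: `C(N, t-1) * 2k ≤ C(N, t-2) * (3k-2)` for `N = 2t+1-3k`, `k ≥ 2`. -/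
lemma aux_j_zero (t k : ℕ) (hk : 2 ≤ k) (hkt : 3 * k ≤ 2 * t + 1) :
    Nat.choose (2 * t + 1 - 3 * k) (t - 1) * (2 * k)
      ≤ Nat.choose (2 * t + 1 - 3 * k) (t - 2) * (3 * k - 2) := by
  set N := 2 * t + 1 - 3 * k with hN
  have ht : 3 ≤ t := by omega
  by_cases hle : t - 1 ≤ N
  · have hst : t - 2 + 1 = t - 1 := by omega
    have h := Nat.choose_succ_right_eq N (t - 2)
    rw [hst] at h
    -- h : N.choose (t-1) * (t-1) = N.choose (t-2) * (N - (t-2))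
    have key : 2 * k * (N - (t - 2)) ≤ (3 * k - 2) * (t - 1) := by
      have : N - (t - 2) = t + 3 - 3 * k := by omega
      rw [this]
      have h3 : 3 * k ≤ t + 2 := by omega
      zify [show 3 * k ≤ t + 3 by omega, show 2 ≤ 3 * k by omega, show 1 ≤ t by omega]
      nlinarith [mul_nonneg (by omega : (0:ℤ) ≤ (k:ℤ) - 2) (by omega : (0:ℤ) ≤ (t:ℤ) - 3)]
    have hpos : 0 < t - 1 := by omega
    have : Nat.choose N (t - 1) * (2 * k) * (t - 1)
        ≤ Nat.choose N (t - 2) * (3 * k - 2) * (t - 1) := by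
      calc Nat.choose N (t - 1) * (2 * k) * (t - 1)
          = Nat.choose N (t - 1) * (t - 1) * (2 * k) := by ring
        _ = Nat.choose N (t - 2) * (N - (t - 2)) * (2 * k) := by rw [h]
        _ = Nat.choose N (t - 2) * (2 * k * (N - (t - 2))) := by ring
        _ ≤ Nat.choose N (t - 2) * ((3 * k - 2) * (t - 1)) :=
            Nat.mul_le_mul_left _ key
        _ = Nat.choose N (t - 2) * (3 * k - 2) * (t - 1) := by ring
    exact Nat.le_of_mul_le_mul_right this hpos
  · rw [Nat.choose_eq_zero_of_lt (by omega)]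
    simp

/-- For all `t`, `k` with `1 ≤ k` and `3k ≤ 2t + 1`:
`Σ_{j=0}^{k-1} C(2t+1-3k, t-1-3j) · C(2k, 1+2j) ≤ 2 · C(2t-2, t-1)`.
Terms where the lower index `t-1-3j` would be negative are `0`, which is handled by the
explicit guard `1 + 3*j ≤ t`. -/
theorem stmt2 (t k : ℕ) (hk : 1 ≤ k) (hkt : 3 * k ≤ 2 * t + 1) :
    ∑ j ∈ Finset.range k,
        (if 1 + 3 * j ≤ t then
          Nat.choose (2 * t + 1 - 3 * k) (t - 1 - 3 * j) * Nat.choose (2 * k) (1 + 2 * j)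
        else 0)
      ≤ 2 * Nat.choose (2 * t - 2) (t - 1) := by
  rcases eq_or_lt_of_le hk with hk1 | hk2
  · -- k = 1 : equality
    subst hk1
    have ht : 1 ≤ t := by omega
    rw [Finset.sum_range_one, if_pos (by omega)]
    have h1 : 2 * t + 1 - 3 * 1 = 2 * t - 2 := by omega
    have h2 : t - 1 - 3 * 0 = t - 1 := by omega
    rw [h1, h2]
    have : Nat.choose (2 * 1) (1 + 2 * 0) = 2 := by decide
    rw [this]
    omega
  · -- k ≥ 2
    have hk2' : 2 ≤ k := hk2
    have ht : 3 ≤ t := by omega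
    set N := 2 * t + 1 - 3 * k with hNdef
    set M := 3 * k - 2 with hMdef
    set G : ℕ → ℕ := fun i => Nat.choose N i * Nat.choose M (t - 1 - i) with hGdef
    -- the injection
    set φ : ℕ → ℕ := fun j => if j = 0 then t - 2 else t - 1 - 3 * j with hφ
    set s : Finset ℕ := (Finset.range k).filter (fun j => 1 + 3 * j ≤ t) with hs
    have step1 : ∑ j ∈ Finset.range k,
        (if 1 + 3 * j ≤ t then
          Nat.choose N (t - 1 - 3 * j) * Nat.choose (2 * k) (1 + 2 * j)
        else 0) = ∑ j ∈ s, Nat.choose N (t - 1 - 3 * j) * Nat.choose (2 * k) (1 + 2 * j) :=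
      (Finset.sum_filter _ _).symm
    rw [step1]
    have step2 : ∑ j ∈ s, Nat.choose N (t - 1 - 3 * j) * Nat.choose (2 * k) (1 + 2 * j)
        ≤ ∑ j ∈ s, G (φ j) := by
      apply Finset.sum_le_sum
      intro j hj
      simp only [hs, Finset.mem_filter, Finset.mem_range] at hj
      obtain ⟨hjk, hjt⟩ := hj
      by_cases hj0 : j = 0
      · subst hj0
        simp only [hφ, hGdef, if_pos rfl]
        have e1 : t - 1 - (t - 2) = 1 := by omega
        rw [e1, Nat.choose_one_right, Nat.choose_one_right]
        have e2 : t - 1 - 3 * 0 = t - 1 := by omega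
        rw [e2]
        exact aux_j_zero t k hk2' hkt
      · simp only [hφ, hGdef, if_neg hj0]
        have e1 : t - 1 - (t - 1 - 3 * j) = 3 * j := by omega
        rw [e1]
        exact Nat.mul_le_mul_left _ (aux_j_pos k j hk2' (by omega) hjk)
    have hinj : Set.InjOn φ s := by
      intro a ha b hb hab
      simp only [hs, Finset.mem_filter, Finset.mem_range, Finset.coe_filter, Set.mem_setOf_eq]
        at ha hb
      have hab' : (if a = 0 then t - 2 else t - 1 - 3 * a)
          = (if b = 0 then t - 2 else t - 1 - 3 * b) := hab
      split_ifs at hab' <;> omega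
    have step3 : ∑ j ∈ s, G (φ j) = ∑ i ∈ s.image φ, G i :=
      (Finset.sum_image (fun a ha b hb => hinj ha hb)).symm
    have step4 : s.image φ ⊆ Finset.range t := by
      intro i hi
      simp only [Finset.mem_image, hs, Finset.mem_filter, Finset.mem_range] at hi
      obtain ⟨j, ⟨hjk, hjt⟩, rfl⟩ := hi
      simp only [hφ, Finset.mem_range]
      split <;> omega
    have step5 : ∑ i ∈ s.image φ, G i ≤ ∑ i ∈ Finset.range t, G i :=
      Finset.sum_le_sum_of_subset step4
    have vdm : ∑ i ∈ Finset.range t, G i = Nat.choose (2 * t - 1) (t - 1) := by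
      have hNM : N + M = 2 * t - 1 := by omega
      rw [← hNM, Nat.add_choose_eq,
        Finset.Nat.sum_antidiagonal_eq_sum_range_succ_mk
          (fun ij => Nat.choose N ij.1 * Nat.choose M ij.2), Nat.succ_eq_add_one,
        show t - 1 + 1 = t from by omega]
    have final : Nat.choose (2 * t - 1) (t - 1) ≤ 2 * Nat.choose (2 * t - 2) (t - 1) := by
      have e1 : 2 * t - 1 = (2 * t - 2) + 1 := by omega
      have e2 : t - 1 = (t - 2) + 1 := by omega
      rw [e1, e2, Nat.choose_succ_succ, Nat.succ_eq_add_one, show t - 2 + 1 = t - 1 from by omega]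
      have hmid : Nat.choose (2 * t - 2) (t - 2) ≤ Nat.choose (2 * t - 2) (t - 1) := by
        have : (2 * t - 2) / 2 = t - 1 := by omega
        calc Nat.choose (2 * t - 2) (t - 2)
            ≤ Nat.choose (2 * t - 2) ((2 * t - 2) / 2) := Nat.choose_le_middle _ _
          _ = Nat.choose (2 * t - 2) (t - 1) := by rw [this]
      omega
    calc ∑ j ∈ s, Nat.choose N (t - 1 - 3 * j) * Nat.choose (2 * k) (1 + 2 * j)
        ≤ ∑ j ∈ s, G (φ j) := step2
      _ = ∑ i ∈ s.image φ, G i := step3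
      _ ≤ ∑ i ∈ Finset.range t, G i := step5
      _ = Nat.choose (2 * t - 1) (t - 1) := vdm
      _ ≤ 2 * Nat.choose (2 * t - 2) (t - 1) := final
end

section
/- Let r ≥ 1, n ≥ 2r, and let π be a permutation of Fin n with |support π| = 2r. If σ ∈ B_r(π) ∩ B_r(1), then |support σ| = r and σ agrees with π on the support of σ, i.e., σ i = π i for every i with σ i ≠ i. In particular, B_r(π) ∩ B_r(1) contains no permutation σ with |support σ| < r. -/
/-- The Hamming distance between two permutations of `Fin n`. -/
def hdist {n : ℕ} (π τ : Equiv.Perm (Fin n)) : ℕ :=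
  (Finset.univ.filter fun i => π i ≠ τ i).card

/-- The metric ball of radius `r` centered at `π` for the Hamming distance. -/
def pball {n : ℕ} (π : Equiv.Perm (Fin n)) (r : ℕ) : Finset (Equiv.Perm (Fin n)) :=
  Finset.univ.filter fun σ => hdist π σ ≤ r

/-- Let `r ≥ 1`, `n ≥ 2r`, and `π` a permutation of `Fin n` with
`|support π| = 2r`. If `σ ∈ B_r(π) ∩ B_r(1)` then `|support σ| = r` and `σ` agrees with
`π` on the support of `σ` (so in particular no `σ` with `|support σ| < r` lies in the
intersection). -/
theorem stmt5 (n r : ℕ) (hr : 1 ≤ r) (hn : 2 * r ≤ n)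
    (π : Equiv.Perm (Fin n)) (hπ : π.support.card = 2 * r)
    (σ : Equiv.Perm (Fin n)) (hσ : σ ∈ pball π r ∩ pball 1 r) :
    σ.support.card = r ∧ ∀ i, σ i ≠ i → σ i = π i := by
  simp only [pball, Finset.mem_inter, Finset.mem_filter, Finset.mem_univ, true_and] at hσ
  obtain ⟨h1, h2⟩ := hσ
  set A : Finset (Fin n) := Finset.univ.filter fun i => π i ≠ σ i with hAdef
  have hB : σ.support = Finset.univ.filter fun i => (1 : Equiv.Perm (Fin n)) i ≠ σ i := by
    ext i
    rw [Finset.mem_filter]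
    simp [Equiv.Perm.mem_support, ne_comm]
  have hBcard : σ.support.card ≤ r := by rw [hB]; exact h2
  have hAcard : A.card ≤ r := h1
  have hsub : π.support ⊆ A ∪ σ.support := by
    intro i hi
    rw [Equiv.Perm.mem_support] at hi
    simp only [Finset.mem_union, hAdef, Finset.mem_filter, Finset.mem_univ, true_and,
      Equiv.Perm.mem_support]
    by_contra h
    push_neg at h
    exact hi (h.1.trans h.2)
  have hle : 2 * r ≤ (A ∪ σ.support).card := hπ ▸ Finset.card_le_card hsub
  have hunion : (A ∪ σ.support).card + (A ∩ σ.support).card = A.card + σ.support.card :=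
    Finset.card_union_add_card_inter A σ.support
  have hinter : (A ∩ σ.support).card = 0 := by omega
  have hdisj : A ∩ σ.support = ∅ := Finset.card_eq_zero.mp hinter
  constructor
  · omega
  · intro i hi
    by_contra hne
    have : i ∈ A ∩ σ.support := by
      simp only [Finset.mem_inter, hAdef, Finset.mem_filter, Finset.mem_univ, true_and,
        Equiv.Perm.mem_support]
      exact ⟨fun h => hne h.symm, hi⟩
    rw [hdisj] at this
    exact absurd this (Finset.notMem_empty i)
end

section
/- For every r ≥ 1 and n ≥ 2r, there exists a permutation π of Fin n with |support π| = 2r, all of whose cycle lengths are 2 or 3 (every part of cycleType π is 2 or 3), such that for all permutations σ, τ of Fin n with d(σ, τ) = 2r, |B_r(σ) ∩ B_r(τ)| ≤ |B_r(π) ∩ B_r(1)|. That is, the maximum intersection I(n, 2r, r) is attained at a permutation whose disjoint cycles all have length 2 or 3. -/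
open Finset Equiv Equiv.Perm

lemma hdist_mul_right {n : ℕ} (π τ ρ : Equiv.Perm (Fin n)) :
    hdist (π * ρ) (τ * ρ) = hdist π τ := by
  unfold hdist
  apply Finset.card_bij' (fun i _ => ρ i) (fun j _ => ρ⁻¹ j)
  · intro a ha
    simp only [mem_filter, mem_univ, true_and, Equiv.Perm.mul_apply] at ha ⊢
    exact (Finset.mem_filter.mp ha).2
  · intro b hb
    simp only [mem_filter, mem_univ, true_and, Equiv.Perm.mul_apply] at hb ⊢
    exact Finset.mem_filter.mpr ⟨Finset.mem_univ _, by simpa using hb⟩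
  · intro a _; simp
  · intro b _; simp

lemma hdist_one_right {n : ℕ} (π : Equiv.Perm (Fin n)) : hdist π 1 = π.support.card := by
  unfold hdist
  congr 1

lemma hdist_one_left {n : ℕ} (π : Equiv.Perm (Fin n)) : hdist 1 π = π.support.card := by
  unfold hdist
  rw [show π.support = Finset.univ.filter fun x => π x ≠ x from rfl]
  congr 1
  apply Finset.filter_congr
  intro x _
  simp [eq_comm]

lemma card_inter_reduce {n : ℕ} (σ τ : Equiv.Perm (Fin n)) (r : ℕ) :
    (pball σ r ∩ pball τ r).card = (pball (σ * τ⁻¹) r ∩ pball 1 r).card := by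
  apply Finset.card_bij' (fun α _ => α * τ⁻¹) (fun β _ => β * τ)
  · intro α hα
    simp only [pball, mem_inter, mem_filter, mem_univ, true_and] at hα ⊢
    have h1 : hdist (σ * τ⁻¹) (α * τ⁻¹) = hdist σ α := by
      have := hdist_mul_right (σ * τ⁻¹) (α * τ⁻¹) τ
      simpa [inv_mul_cancel_right] using this.symm
    have h2 : hdist 1 (α * τ⁻¹) = hdist τ α := by
      have := hdist_mul_right (1 : Equiv.Perm (Fin n)) (α * τ⁻¹) τ
      simpa [inv_mul_cancel_right] using this.symm
    exact ⟨h1 ▸ hα.1, h2 ▸ hα.2⟩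
  · intro β hβ
    simp only [pball, mem_inter, mem_filter, mem_univ, true_and] at hβ ⊢
    have h1 : hdist σ (β * τ) = hdist (σ * τ⁻¹) β := by
      have := hdist_mul_right (σ * τ⁻¹) β τ
      simpa [inv_mul_cancel_right] using this
    have h2 : hdist τ (β * τ) = hdist 1 β := by
      have := hdist_mul_right (1 : Equiv.Perm (Fin n)) β τ
      simpa using this
    exact ⟨h1 ▸ hβ.1, h2 ▸ hβ.2⟩
  · intro a _; simp [mul_assoc]
  · intro b _; simp [mul_assoc]

def Fam {n : ℕ} (π : Equiv.Perm (Fin n)) (r : ℕ) : Finset (Finset (Equiv.Perm (Fin n))) :=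
  π.cycleFactorsFinset.powerset.filter fun S => (∑ c ∈ S, c.support.card) = r

lemma mem_iff_apply_mem {n : ℕ} (π : Equiv.Perm (Fin n)) (B : Finset (Fin n))
    (h : ∀ x ∈ B, π x ∈ B) (x : Fin n) : x ∈ B ↔ π x ∈ B := by
  have himg : B.image π = B := by
    apply Finset.eq_of_subset_of_card_le
    · intro y hy
      obtain ⟨z, hz, rfl⟩ := Finset.mem_image.mp hy
      exact h z hz
    · rw [Finset.card_image_of_injective _ π.injective]
  constructor
  · exact h x
  · intro hx
    rw [← himg] at hx
    obtain ⟨y, hy, hyx⟩ := Finset.mem_image.mp hx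
    rwa [← π.injective hyx]

lemma pow_mem_of_mem {n : ℕ} (π : Equiv.Perm (Fin n)) (B : Finset (Fin n))
    (h : ∀ x ∈ B, π x ∈ B) (x : Fin n) (hx : x ∈ B) (k : ℕ) : (π ^ k) x ∈ B := by
  induction k with
  | zero => simpa using hx
  | succ k ih =>
    rw [pow_succ']
    exact h _ ih

-- support of a union of cycle factors
lemma biUnion_support_inj {n : ℕ} {π : Equiv.Perm (Fin n)}
    {S S' : Finset (Equiv.Perm (Fin n))} (hS : S ⊆ π.cycleFactorsFinset)
    (hS' : S' ⊆ π.cycleFactorsFinset)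
    (h : S.biUnion Equiv.Perm.support = S'.biUnion Equiv.Perm.support) : S = S' := by
  have key : ∀ T T' : Finset (Equiv.Perm (Fin n)), T ⊆ π.cycleFactorsFinset →
      T' ⊆ π.cycleFactorsFinset →
      T.biUnion Equiv.Perm.support = T'.biUnion Equiv.Perm.support → T ⊆ T' := by
    intro T T' hT hT' hb c hc
    have hcyc := (Equiv.Perm.mem_cycleFactorsFinset_iff.mp (hT hc)).1
    obtain ⟨x, hx⟩ := hcyc.nonempty_support
    have hxB : x ∈ T'.biUnion Equiv.Perm.support := by
      rw [← hb]; exact Finset.mem_biUnion.mpr ⟨c, hc, hx⟩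
    obtain ⟨c', hc', hxc'⟩ := Finset.mem_biUnion.mp hxB
    have : c = c' := by
      by_contra hne
      have hd := Equiv.Perm.cycleFactorsFinset_pairwise_disjoint π (hT hc) (hT' hc') hne
      rw [Equiv.Perm.disjoint_iff_disjoint_support] at hd
      exact (Finset.disjoint_left.mp hd hx) hxc'
    rwa [this]
  exact le_antisymm (key S S' hS hS' h) (key S' S hS' hS h.symm)

lemma inter_props {n r : ℕ} {π σ : Equiv.Perm (Fin n)} (hπ : π.support.card = 2 * r)
    (hσ : σ ∈ pball π r ∩ pball 1 r) :
    σ.support.card = r ∧ (∀ x ∈ σ.support, σ x = π x) ∧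
      σ.support =
        (π.cycleFactorsFinset.filter fun c => c.support ⊆ σ.support).biUnion
          Equiv.Perm.support := by
  classical
  obtain ⟨h1, h2⟩ := Finset.mem_inter.mp hσ
  have hA : (Finset.univ.filter fun i => π i ≠ σ i).card ≤ r := by
    simpa [pball, hdist] using h1
  have hB : σ.support.card ≤ r := by
    have := (Finset.mem_filter.mp h2).2
    rwa [hdist_one_left] at this
  set A := Finset.univ.filter fun i => π i ≠ σ i with hAdef
  set B := σ.support with hBdef
  have hsub : π.support ⊆ A ∪ B := by
    intro i hi
    by_cases h : π i = σ i
    · exact Finset.mem_union_right _ (by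
        rw [hBdef, Equiv.Perm.mem_support, ← h]
        exact Equiv.Perm.mem_support.mp hi)
    · exact Finset.mem_union_left _ (Finset.mem_filter.mpr ⟨Finset.mem_univ _, h⟩)
  have hcard : 2 * r ≤ (A ∪ B).card := hπ ▸ Finset.card_le_card hsub
  have hABle : (A ∪ B).card ≤ A.card + B.card := Finset.card_union_le _ _
  have hAr : A.card = r := by omega
  have hBr : B.card = r := by omega
  have hU : π.support = A ∪ B :=
    Finset.eq_of_subset_of_card_le hsub (by omega)
  have hint : (A ∩ B).card = 0 := by
    have := Finset.card_union_add_card_inter A B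
    omega
  have hdisj : Disjoint A B := by
    rw [Finset.disjoint_iff_inter_eq_empty]
    exact Finset.card_eq_zero.mp hint
  have agree : ∀ x ∈ B, σ x = π x := by
    intro x hx
    have hxA : x ∉ A := Finset.disjoint_right.mp hdisj hx
    have := Finset.mem_filter.not.mp hxA
    push_neg at this
    exact (this (Finset.mem_univ _)).symm
  have hBsub : B ⊆ π.support := by rw [hU]; exact Finset.subset_union_right
  have hinv : ∀ x ∈ B, π x ∈ B := by
    intro x hx
    rw [← agree x hx]
    exact Equiv.Perm.apply_mem_support.mpr hx
  refine ⟨hBr, agree, ?_⟩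
  apply Finset.Subset.antisymm
  · intro x hx
    have hxπ : x ∈ π.support := hBsub hx
    have hcf : π.cycleOf x ∈ π.cycleFactorsFinset :=
      Equiv.Perm.cycleOf_mem_cycleFactorsFinset_iff.mpr hxπ
    have hsupp : (π.cycleOf x).support ⊆ B := by
      intro j hj
      obtain ⟨hsc, -⟩ := Equiv.Perm.mem_support_cycleOf_iff.mp hj
      obtain ⟨k, -, -, hk⟩ := Equiv.Perm.SameCycle.exists_pow_eq π hsc
      rw [← hk]
      exact pow_mem_of_mem π B hinv x hx k
    refine Finset.mem_biUnion.mpr ⟨π.cycleOf x, Finset.mem_filter.mpr ⟨hcf, hsupp⟩, ?_⟩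
    exact Equiv.Perm.mem_support_cycleOf_iff.mpr ⟨Equiv.Perm.SameCycle.refl _ _, hxπ⟩
  · intro x hx
    obtain ⟨c, hc, hxc⟩ := Finset.mem_biUnion.mp hx
    exact (Finset.mem_filter.mp hc).2 hxc

lemma upper {n r : ℕ} (π : Equiv.Perm (Fin n)) (hπ : π.support.card = 2 * r) :
    (pball π r ∩ pball 1 r).card ≤ (Fam π r).card := by
  classical
  apply Finset.card_le_card_of_injOn
    (fun σ => π.cycleFactorsFinset.filter fun c => c.support ⊆ σ.support)
  · intro σ hσ
    obtain ⟨hBr, -, hBeq⟩ := inter_props hπ hσ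
    refine Finset.mem_filter.mpr ⟨Finset.mem_powerset.mpr (Finset.filter_subset _ _), ?_⟩
    rw [← Finset.card_biUnion, ← hBeq, hBr]
    intro c hc d hd hne
    have := Equiv.Perm.cycleFactorsFinset_pairwise_disjoint π
      ((Finset.filter_subset _ _) hc) ((Finset.filter_subset _ _) hd) hne
    exact Equiv.Perm.disjoint_iff_disjoint_support.mp this
  · intro σ hσ σ' hσ' heq
    obtain ⟨-, hag, hBeq⟩ := inter_props hπ hσ
    obtain ⟨-, hag', hBeq'⟩ := inter_props hπ hσ'
    dsimp only at heq
    have hBB : σ.support = σ'.support := by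
      rw [hBeq, hBeq', heq]
    apply Equiv.ext
    intro x
    by_cases hx : x ∈ σ.support
    · rw [hag x hx, ← hag' x (hBB ▸ hx)]
    · have hx' : x ∉ σ'.support := hBB ▸ hx
      rw [Equiv.Perm.notMem_support.mp hx, Equiv.Perm.notMem_support.mp hx']

lemma lower {n r : ℕ} (π : Equiv.Perm (Fin n)) (hπ : π.support.card = 2 * r) :
    (Fam π r).card ≤ (pball π r ∩ pball 1 r).card := by
  classical
  set f : Finset (Equiv.Perm (Fin n)) → Equiv.Perm (Fin n) := fun S =>
    if h : ∀ x, (x ∈ S.biUnion Equiv.Perm.support) ↔ (π x ∈ S.biUnion Equiv.Perm.support)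
    then Equiv.Perm.ofSubtype (π.subtypePerm (fun x => (h x).symm)) else 1 with hf
  -- facts for S ∈ Fam π r
  have key : ∀ S ∈ Fam π r, (f S).support = S.biUnion Equiv.Perm.support ∧
      (∀ x ∈ S.biUnion Equiv.Perm.support, f S x = π x) := by
    intro S hS
    obtain ⟨hSsub, hSsum⟩ := Finset.mem_filter.mp hS
    rw [Finset.mem_powerset] at hSsub
    set B := S.biUnion Equiv.Perm.support with hBdef
    have hBinv : ∀ x ∈ B, π x ∈ B := by
      intro x hx
      obtain ⟨c, hc, hxc⟩ := Finset.mem_biUnion.mp hx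
      have hcf := Equiv.Perm.mem_cycleFactorsFinset_iff.mp (hSsub hc)
      have : π x = c x := (hcf.2 x hxc).symm
      rw [this]
      exact Finset.mem_biUnion.mpr ⟨c, hc, Equiv.Perm.apply_mem_support.mpr hxc⟩
    have hiff : ∀ x, (x ∈ B) ↔ (π x ∈ B) := mem_iff_apply_mem π B hBinv
    have hBππ : B ⊆ π.support := by
      intro x hx
      obtain ⟨c, hc, hxc⟩ := Finset.mem_biUnion.mp hx
      exact Equiv.Perm.mem_cycleFactorsFinset_support_le (hSsub hc) hxc
    have hfS : f S = Equiv.Perm.ofSubtype (π.subtypePerm (fun x => (hiff x).symm)) := by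
      rw [hf]; exact dif_pos hiff
    have happ : ∀ x ∈ B, f S x = π x := by
      intro x hx
      rw [hfS, Equiv.Perm.ofSubtype_apply_of_mem _ hx]
      rfl
    have hnapp : ∀ x, x ∉ B → f S x = x := by
      intro x hx
      rw [hfS, Equiv.Perm.ofSubtype_apply_of_not_mem _ hx]
    constructor
    · ext x
      rw [Equiv.Perm.mem_support]
      constructor
      · intro hne
        by_contra hx
        exact hne (hnapp x hx)
      · intro hx
        rw [happ x hx]
        exact Equiv.Perm.mem_support.mp (hBππ hx)
    · exact happ
  have hcardB : ∀ S ∈ Fam π r, (S.biUnion Equiv.Perm.support).card = r := by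
    intro S hS
    obtain ⟨hSsub, hSsum⟩ := Finset.mem_filter.mp hS
    rw [Finset.mem_powerset] at hSsub
    rw [Finset.card_biUnion, hSsum]
    intro c hc d hd hne
    exact Equiv.Perm.disjoint_iff_disjoint_support.mp
      (Equiv.Perm.cycleFactorsFinset_pairwise_disjoint π (hSsub hc) (hSsub hd) hne)
  apply Finset.card_le_card_of_injOn f
  · intro S hS
    obtain ⟨hsupp, happ⟩ := key S hS
    obtain ⟨hSsub, hSsum⟩ := Finset.mem_filter.mp hS
    rw [Finset.mem_powerset] at hSsub
    have hBππ : S.biUnion Equiv.Perm.support ⊆ π.support := by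
      intro x hx
      obtain ⟨c, hc, hxc⟩ := Finset.mem_biUnion.mp hx
      exact Equiv.Perm.mem_cycleFactorsFinset_support_le (hSsub hc) hxc
    have hBr : (f S).support.card = r := by rw [hsupp]; exact hcardB S hS
    rw [Finset.mem_coe, Finset.mem_inter, pball, pball, Finset.mem_filter, Finset.mem_filter]
    refine ⟨⟨Finset.mem_univ _, ?_⟩, ⟨Finset.mem_univ _, ?_⟩⟩
    · -- hdist π (f S) ≤ r
      have hsubdiff : (Finset.univ.filter fun i => π i ≠ f S i) ⊆ π.support \ (f S).support := by
        intro i hi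
        have hne := (Finset.mem_filter.mp hi).2
        have hiB : i ∉ (f S).support := by
          rw [hsupp]
          intro hiB
          exact hne ((happ i hiB).symm)
        refine Finset.mem_sdiff.mpr ⟨?_, hiB⟩
        have : f S i = i := Equiv.Perm.notMem_support.mp hiB
        rw [Equiv.Perm.mem_support]
        intro hpi
        exact hne (by rw [hpi, this])
      calc hdist π (f S) ≤ (π.support \ (f S).support).card :=
            Finset.card_le_card hsubdiff
        _ = π.support.card - (f S).support.card := by
            rw [Finset.card_sdiff_of_subset (by rw [hsupp]; exact hBππ)]
        _ ≤ r := by rw [hπ, hBr]; omega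
    · rw [hdist_one_left, hBr]
  · intro S hS S' hS' heq
    have h1 := (key S hS).1
    have h2 := (key S' hS').1
    apply biUnion_support_inj (Finset.mem_powerset.mp (Finset.mem_filter.mp hS).1)
      (Finset.mem_powerset.mp (Finset.mem_filter.mp hS').1)
    rw [← h1, ← h2, heq]

lemma anti_bound {α : Type*} [DecidableEq α] (γ : Finset α) (w : α → ℕ)
    (hw : ∀ c ∈ γ, 0 < w c) (s : ℕ) (𝒜 : Finset (Finset α))
    (h𝒜 : ∀ S ∈ 𝒜, S ⊆ γ ∧ ∑ c ∈ S, w c = s) :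
    𝒜.card ≤ γ.card.choose (γ.card / 2) := by
  classical
  set e : Finset α → Finset {x // x ∈ γ} := fun S => S.subtype (· ∈ γ) with he
  have hmem : ∀ (S : Finset α), S ⊆ γ → ∀ x (hx : x ∈ γ), (⟨x, hx⟩ : {x // x ∈ γ}) ∈ e S ↔ x ∈ S := by
    intro S hS x hx
    simp [he, Finset.mem_subtype]
  have hsub : ∀ S T : Finset α, S ⊆ γ → T ⊆ γ → e S ⊆ e T → S ⊆ T := by
    intro S T hS hT hst x hx
    have hxγ : x ∈ γ := hS hx
    exact (hmem T hT x hxγ).mp (hst ((hmem S hS x hxγ).mpr hx))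
  have hinj : Set.InjOn e ↑𝒜 := by
    intro S hS T hT hST
    have hSγ := (h𝒜 S hS).1
    have hTγ := (h𝒜 T hT).1
    exact le_antisymm (hsub S T hSγ hTγ (le_of_eq hST)) (hsub T S hTγ hSγ (le_of_eq hST.symm))
  have hanti : IsAntichain (· ⊆ ·) (↑(𝒜.image e) : Set (Finset {x // x ∈ γ})) := by
    intro a ha b hb hne hsub'
    simp only [Finset.coe_image, Set.mem_image, Finset.mem_coe] at ha hb
    obtain ⟨S, hS, rfl⟩ := ha
    obtain ⟨T, hT, rfl⟩ := hb
    obtain ⟨hSγ, hSsum⟩ := h𝒜 S hS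
    obtain ⟨hTγ, hTsum⟩ := h𝒜 T hT
    have hST : S ⊆ T := hsub S T hSγ hTγ hsub'
    have hSTne : S ≠ T := fun h => hne (by rw [h])
    have hdiff : (T \ S).Nonempty := by
      rw [Finset.sdiff_nonempty]
      intro h
      exact hSTne (le_antisymm hST h)
    have hsum0 : ∑ c ∈ T \ S, w c = 0 := by
      have h := Finset.sum_sdiff hST (f := w)
      rw [hSsum, hTsum] at h
      omega
    obtain ⟨x, hx⟩ := hdiff
    have hx0 : w x = 0 := by
      have := Finset.sum_eq_zero_iff.mp hsum0 x hx
      exact this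
    have : 0 < w x := hw x (hTγ (Finset.mem_sdiff.mp hx).1)
    omega
  calc 𝒜.card = (𝒜.image e).card := (Finset.card_image_of_injOn hinj).symm
    _ ≤ (Fintype.card {x // x ∈ γ}).choose (Fintype.card {x // x ∈ γ} / 2) := IsAntichain.sperner hanti
    _ = γ.card.choose (γ.card / 2) := by rw [Fintype.card_coe]

lemma central_mono : ∀ {k m : ℕ}, k ≤ m → k.choose (k / 2) ≤ m.choose (m / 2) := by
  intro k m h
  induction m with
  | zero => simpa using Nat.le_zero.mp h ▸ le_refl _
  | succ m ih =>
    rcases Nat.lt_or_ge k (m + 1) with h' | h'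
    · calc k.choose (k / 2) ≤ m.choose (m / 2) := ih (by omega)
        _ ≤ (m + 1).choose (m / 2) := Nat.choose_le_choose _ (by omega)
        _ ≤ (m + 1).choose ((m + 1) / 2) := Nat.choose_le_middle _ _
    · have : k = m + 1 := by omega
      subst this
      exact le_refl _

def Mval (r : ℕ) : ℕ :=
  if 2 ∣ r then r.choose (r / 2) else if r = 1 then 0 else 2 * ((r - 3).choose ((r - 3) / 2))

lemma core {α : Type*} [DecidableEq α] (γ : Finset α) (w : α → ℕ) (r : ℕ)
    (h2 : ∀ c ∈ γ, 2 ≤ w c) (hsum : ∑ c ∈ γ, w c = 2 * r) :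
    (γ.powerset.filter fun S => ∑ c ∈ S, w c = r).card ≤ Mval r := by
  classical
  set F := γ.powerset.filter fun S => ∑ c ∈ S, w c = r with hF
  have hFmem : ∀ S ∈ F, S ⊆ γ ∧ ∑ c ∈ S, w c = r := by
    intro S hS
    obtain ⟨h1, h2⟩ := Finset.mem_filter.mp hS
    exact ⟨Finset.mem_powerset.mp h1, h2⟩
  have hwpos : ∀ c ∈ γ, 0 < w c := fun c hc => lt_of_lt_of_le (by omega) (h2 c hc)
  have h2k : 2 * γ.card ≤ 2 * r := by
    calc 2 * γ.card = ∑ _c ∈ γ, 2 := by rw [Finset.sum_const, smul_eq_mul]; ring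
      _ ≤ ∑ c ∈ γ, w c := Finset.sum_le_sum h2
      _ = 2 * r := hsum
  have hkr : γ.card ≤ r := by omega
  by_cases hr2 : 2 ∣ r
  · rw [Mval, if_pos hr2]
    calc F.card ≤ γ.card.choose (γ.card / 2) := anti_bound γ w hwpos r F hFmem
      _ ≤ r.choose (r / 2) := central_mono hkr
  · -- odd case
    set O := γ.filter fun c => Odd (w c) with hO
    have hOγ : O ⊆ γ := Finset.filter_subset _ _
    have hte : Even O.card := by
      have : Even (∑ c ∈ γ, w c) := by rw [hsum]; exact even_two_mul r
      rwa [Finset.even_sum_iff_even_card_odd] at this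
    have hoddS : ∀ S ∈ F, Odd ((S.filter fun c => Odd (w c)).card) := by
      intro S hS
      have := (hFmem S hS).2
      have hro : Odd r := Nat.odd_iff.mpr (by omega)
      rw [← this] at hro
      rwa [Finset.odd_sum_iff_odd_card_odd] at hro
    by_cases ht0 : O.card = 0
    · have : F = ∅ := by
        apply Finset.eq_empty_of_forall_notMem
        intro S hS
        have hodd := hoddS S hS
        have hsubO : (S.filter fun c => Odd (w c)) ⊆ O := by
          intro x hx
          obtain ⟨hxS, hxodd⟩ := Finset.mem_filter.mp hx
          exact Finset.mem_filter.mpr ⟨(hFmem S hS).1 hxS, hxodd⟩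
        have hz : (S.filter fun c => Odd (w c)).card = 0 := by
          have := Finset.card_le_card hsubO
          omega
        rw [hz] at hodd
        exact absurd (Nat.odd_iff.mp hodd) (by norm_num)
      rw [this]
      simp
    · have ht2 : 2 ≤ O.card := by
        rcases hte with ⟨m, hm⟩
        omega
      have hkt : O.card ≤ γ.card := Finset.card_le_card hOγ
      -- refined bound: 2*k + t ≤ 2*r
      have hsplit : ∑ c ∈ γ, w c = ∑ c ∈ O, w c + ∑ c ∈ γ.filter (fun c => ¬ Odd (w c)), w c :=
        (Finset.sum_filter_add_sum_filter_not γ _ w).symm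
      have hO3 : ∀ c ∈ O, 3 ≤ w c := by
        intro c hc
        obtain ⟨hcγ, hcodd⟩ := Finset.mem_filter.mp hc
        have := h2 c hcγ
        have := Nat.odd_iff.mp hcodd
        omega
      have hsumO : 3 * O.card ≤ ∑ c ∈ O, w c := by
        calc 3 * O.card = ∑ _c ∈ O, 3 := by rw [Finset.sum_const, smul_eq_mul]; ring
          _ ≤ ∑ c ∈ O, w c := Finset.sum_le_sum hO3
      have hcardnot : (γ.filter fun c => ¬ Odd (w c)).card = γ.card - O.card := by
        have := Finset.card_filter_add_card_filter_not (s := γ) (p := fun c => Odd (w c))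
        rw [hO]
        omega
      have hsumnot : 2 * (γ.card - O.card) ≤ ∑ c ∈ γ.filter (fun c => ¬ Odd (w c)), w c := by
        calc 2 * (γ.card - O.card) = ∑ _c ∈ γ.filter (fun c => ¬ Odd (w c)), 2 := by
              rw [Finset.sum_const, smul_eq_mul, hcardnot]; ring
          _ ≤ _ := Finset.sum_le_sum (fun c hc => h2 c (Finset.filter_subset _ _ hc))
      have hsum' : (∑ c ∈ O, w c) + (∑ c ∈ γ.filter (fun c => ¬ Odd (w c)), w c) = 2 * r := by
        rw [← hsum, hsplit]
      have hrefined : 2 * γ.card + O.card ≤ 2 * r := by omega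
      have hr3 : 3 ≤ r := by
        have : 2 ≤ γ.card := le_trans ht2 hkt
        have hro : r % 2 = 1 := by omega
        omega
      rw [Mval, if_neg hr2, if_neg (by omega)]
      obtain ⟨c₀, hc₀⟩ := Finset.card_pos.mp (by omega : 0 < O.card)
      -- split F by membership of c₀
      have hsplitF : F.card = (F.filter fun S => c₀ ∈ S).card +
          (F.filter fun S => c₀ ∉ S).card :=
        (Finset.card_filter_add_card_filter_not (p := fun S => c₀ ∈ S)).symm
      by_cases hkcase : γ.card + 2 ≤ r
      · -- generic case
        have hbound1 : (F.filter fun S => c₀ ∉ S).card ≤ (γ.card-1).choose ((γ.card-1) / 2) := by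
          have := anti_bound (γ.erase c₀) w
            (fun c hc => hwpos c (Finset.erase_subset _ _ hc)) r
            (F.filter fun S => c₀ ∉ S) ?_
          · rwa [Finset.card_erase_of_mem (hOγ hc₀)] at this
          · intro S hS
            obtain ⟨hSF, hSc₀⟩ := Finset.mem_filter.mp hS
            obtain ⟨hSγ, hSsum⟩ := hFmem S hSF
            exact ⟨fun x hx => Finset.mem_erase.mpr ⟨fun h => hSc₀ (h ▸ hx), hSγ hx⟩, hSsum⟩
        have hbound2 : (F.filter fun S => c₀ ∈ S).card ≤ (γ.card-1).choose ((γ.card-1) / 2) := by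
          have himage : ((F.filter fun S => c₀ ∈ S).image fun S => S.erase c₀).card
              = (F.filter fun S => c₀ ∈ S).card := by
            apply Finset.card_image_of_injOn
            intro S hS T hT hst
            dsimp only at hst
            have hcS := (Finset.mem_filter.mp hS).2
            have hcT := (Finset.mem_filter.mp hT).2
            rw [← Finset.insert_erase hcS, ← Finset.insert_erase hcT, hst]
          have := anti_bound (γ.erase c₀) w
            (fun c hc => hwpos c (Finset.erase_subset _ _ hc)) (r - w c₀)
            ((F.filter fun S => c₀ ∈ S).image fun S => S.erase c₀) ?_
          · rw [himage] at this
            rwa [Finset.card_erase_of_mem (hOγ hc₀)] at this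
          · intro S' hS'
            obtain ⟨S, hS, rfl⟩ := Finset.mem_image.mp hS'
            obtain ⟨hSF, hSc₀⟩ := Finset.mem_filter.mp hS
            obtain ⟨hSγ, hSsum⟩ := hFmem S hSF
            constructor
            · intro x hx
              obtain ⟨hxne, hxS⟩ := Finset.mem_erase.mp hx
              exact Finset.mem_erase.mpr ⟨hxne, hSγ hxS⟩
            · have := Finset.sum_erase_add S w hSc₀
              omega
        have hmono : (γ.card-1).choose ((γ.card-1)/2) ≤ (r-3).choose ((r-3)/2) :=
          central_mono (by omega)
        omega
      · -- k = r - 1, t = 2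
        have hkr1 : γ.card = r - 1 := by omega
        have ht2' : O.card = 2 := by omega
        -- O = {c₀, c₁}
        have hOc : (O.erase c₀).card = 1 := by
          rw [Finset.card_erase_of_mem hc₀]; omega
        obtain ⟨c₁, hc₁⟩ := Finset.card_eq_one.mp hOc
        have hc₁O : c₁ ∈ O := by
          have : c₁ ∈ O.erase c₀ := by rw [hc₁]; exact Finset.mem_singleton_self _
          exact Finset.erase_subset _ _ this
        have hne01 : c₁ ≠ c₀ := by
          have : c₁ ∈ O.erase c₀ := by rw [hc₁]; exact Finset.mem_singleton_self _
          exact (Finset.mem_erase.mp this).1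
        have hOeq : O = {c₀, c₁} := by
          have h1 : {c₀, c₁} ⊆ O := by
            intro x hx
            rcases Finset.mem_insert.mp hx with h | h
            · exact h ▸ hc₀
            · exact (Finset.mem_singleton.mp h) ▸ hc₁O
          apply (Finset.eq_of_subset_of_card_le h1 ?_).symm
          rw [Finset.card_insert_of_notMem (by simp [hne01.symm]), Finset.card_singleton]
          omega
        -- each S in F contains exactly one of c₀, c₁
        have hexact : ∀ S ∈ F, (c₀ ∈ S ∧ c₁ ∉ S) ∨ (c₀ ∉ S ∧ c₁ ∈ S) := by
          intro S hS
          have hodd := hoddS S hS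
          have hsubO : (S.filter fun c => Odd (w c)) ⊆ O := by
            intro x hx
            obtain ⟨hxS, hxodd⟩ := Finset.mem_filter.mp hx
            exact Finset.mem_filter.mpr ⟨(hFmem S hS).1 hxS, hxodd⟩
          have hcard2 : (S.filter fun c => Odd (w c)).card ≤ 2 := by
            have := Finset.card_le_card hsubO
            omega
          have hcard1 : (S.filter fun c => Odd (w c)).card = 1 := by
            rcases hodd with ⟨m, hm⟩
            omega
          obtain ⟨a, ha⟩ := Finset.card_eq_one.mp hcard1
          have haO : a ∈ O := hsubO (ha ▸ Finset.mem_singleton_self _)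
          have haS : a ∈ S := (Finset.mem_filter.mp (ha ▸ Finset.mem_singleton_self a :
            a ∈ S.filter fun c => Odd (w c))).1
          have hodd0 : Odd (w c₀) := (Finset.mem_filter.mp hc₀).2
          have hodd1 : Odd (w c₁) := (Finset.mem_filter.mp hc₁O).2
          rcases Finset.mem_insert.mp (hOeq ▸ haO) with h | h
          · left
            subst h
            refine ⟨haS, fun hc₁S => ?_⟩
            have : c₁ ∈ S.filter fun c => Odd (w c) := Finset.mem_filter.mpr ⟨hc₁S, hodd1⟩
            rw [ha] at this
            exact hne01 (Finset.mem_singleton.mp this)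
          · right
            rw [Finset.mem_singleton.mp h] at haS ha
            refine ⟨fun hc₀S => ?_, haS⟩
            have : c₀ ∈ S.filter fun c => Odd (w c) := Finset.mem_filter.mpr ⟨hc₀S, hodd0⟩
            rw [ha] at this
            exact hne01 (Finset.mem_singleton.mp this).symm
        -- ground set with both removed
        have hground : ((γ.erase c₀).erase c₁).card = r - 3 := by
          rw [Finset.card_erase_of_mem, Finset.card_erase_of_mem (hOγ hc₀)]
          · omega
          · exact Finset.mem_erase.mpr ⟨hne01, hOγ hc₁O⟩
        have hwpos' : ∀ c ∈ (γ.erase c₀).erase c₁, 0 < w c := fun c hc =>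
          hwpos c (Finset.erase_subset _ _ (Finset.erase_subset _ _ hc))
        have hbound : ∀ (d : α), d ∈ O → ∀ (dd : α), dd ∈ O → d ≠ dd →
            (F.filter fun S => d ∈ S ∧ dd ∉ S).card ≤ (r-3).choose ((r-3)/2) := by
          intro d hd dd hdd hddne
          have himage : ((F.filter fun S => d ∈ S ∧ dd ∉ S).image fun S => S.erase d).card
              = (F.filter fun S => d ∈ S ∧ dd ∉ S).card := by
            apply Finset.card_image_of_injOn
            intro S hS T hT hst
            dsimp only at hst
            have hcS := (Finset.mem_filter.mp hS).2.1
            have hcT := (Finset.mem_filter.mp hT).2.1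
            rw [← Finset.insert_erase hcS, ← Finset.insert_erase hcT, hst]
          have := anti_bound ((γ.erase d).erase dd) w
            (fun c hc => hwpos c (Finset.erase_subset _ _ (Finset.erase_subset _ _ hc)))
            (r - w d)
            ((F.filter fun S => d ∈ S ∧ dd ∉ S).image fun S => S.erase d) ?_
          · rw [himage] at this
            have hgr : ((γ.erase d).erase dd).card = r - 3 := by
              rw [Finset.card_erase_of_mem, Finset.card_erase_of_mem (hOγ hd)]
              · omega
              · exact Finset.mem_erase.mpr ⟨hddne.symm, hOγ hdd⟩
            rwa [hgr] at this
          · intro S' hS'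
            obtain ⟨S, hS, rfl⟩ := Finset.mem_image.mp hS'
            obtain ⟨hSF, hSd, hSdd⟩ := Finset.mem_filter.mp hS
            obtain ⟨hSγ, hSsum⟩ := hFmem S hSF
            constructor
            · intro x hx
              obtain ⟨hxne, hxS⟩ := Finset.mem_erase.mp hx
              refine Finset.mem_erase.mpr ⟨fun h => hSdd (h ▸ hxS), Finset.mem_erase.mpr ⟨hxne, hSγ hxS⟩⟩
            · have := Finset.sum_erase_add S w hSd
              omega
        have hb0 : (F.filter fun S => c₀ ∈ S).card ≤ (r-3).choose ((r-3)/2) := by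
          have heq : (F.filter fun S => c₀ ∈ S) = (F.filter fun S => c₀ ∈ S ∧ c₁ ∉ S) := by
            apply Finset.filter_congr
            intro S hS
            rcases hexact S hS with ⟨h1, h2⟩ | ⟨h1, h2⟩
            · simp [h1, h2]
            · simp [h1]
          rw [heq]
          exact hbound c₀ hc₀ c₁ hc₁O (Ne.symm hne01)
        have hb1 : (F.filter fun S => c₀ ∉ S).card ≤ (r-3).choose ((r-3)/2) := by
          have heq : (F.filter fun S => c₀ ∉ S) = (F.filter fun S => c₁ ∈ S ∧ c₀ ∉ S) := by
            apply Finset.filter_congr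
            intro S hS
            rcases hexact S hS with ⟨h1, h2⟩ | ⟨h1, h2⟩
            · simp [h1, h2]
            · simp [h1, h2]
          rw [heq]
          exact hbound c₁ hc₁O c₀ hc₀ hne01
        omega

lemma exists_replicate2 (n k : ℕ) (hk : 2 * k ≤ n) :
    ∃ π : Equiv.Perm (Fin n), π.cycleType = Multiset.replicate k 2 ∧
      ∀ x ∈ π.support, (x : ℕ) < 2 * k := by
  induction k with
  | zero => exact ⟨1, by simp, by simp⟩
  | succ k ih =>
    obtain ⟨π, hct, hsup⟩ := ih (by omega)
    have ha : 2 * k < n := by omega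
    have hb : 2 * k + 1 < n := by omega
    set a : Fin n := ⟨2 * k, ha⟩ with hadef
    set b : Fin n := ⟨2 * k + 1, hb⟩ with hbdef
    have hab : a ≠ b := by
      simp [hadef, hbdef, Fin.ext_iff]
    have hd : π.Disjoint (Equiv.swap a b) := by
      rw [Equiv.Perm.disjoint_iff_disjoint_support, Equiv.Perm.support_swap hab,
        Finset.disjoint_left]
      intro x hx hmem
      have hlt := hsup x hx
      rcases Finset.mem_insert.mp hmem with h | h
      · rw [h] at hlt; simp [hadef] at hlt
      · rw [Finset.mem_singleton.mp h] at hlt; simp [hbdef] at hlt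
    refine ⟨π * Equiv.swap a b, ?_, ?_⟩
    · rw [Equiv.Perm.Disjoint.cycleType_mul hd, hct, (Equiv.Perm.isCycle_swap hab).cycleType,
        Equiv.Perm.support_swap hab]
      have hc2 : ({a, b} : Finset (Fin n)).card = 2 := by
        rw [Finset.card_insert_of_notMem (by simp [hab]), Finset.card_singleton]
      rw [hc2]
      have h12 : ({2} : Multiset ℕ) = Multiset.replicate 1 2 := rfl
      rw [h12, ← Multiset.replicate_add]
    · rw [hd.support_mul]
      intro x hx
      rcases Finset.mem_union.mp hx with h | h
      · have := hsup x h; omega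
      · rw [Equiv.Perm.support_swap hab] at h
        rcases Finset.mem_insert.mp h with h | h
        · rw [h]; simp [hadef]
        · rw [Finset.mem_singleton.mp h]; simp [hbdef]; omega

lemma exists_three (n s : ℕ) (hs : s + 3 ≤ n) :
    ∃ π : Equiv.Perm (Fin n), π.cycleType = {3} ∧
      ∀ x ∈ π.support, s ≤ (x : ℕ) ∧ (x : ℕ) < s + 3 := by
  have h1 : s < n := by omega
  have h2 : s + 1 < n := by omega
  have h3 : s + 2 < n := by omega
  set a : Fin n := ⟨s, h1⟩
  set b : Fin n := ⟨s + 1, h2⟩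
  set c : Fin n := ⟨s + 2, h3⟩
  have hab : a ≠ b := by simp [a, b, Fin.ext_iff]
  have hac : a ≠ c := by simp [a, c, Fin.ext_iff]
  have hbc : b ≠ c := by simp [b, c, Fin.ext_iff]
  have h3c : Equiv.Perm.IsThreeCycle (Equiv.swap a b * Equiv.swap a c) :=
    Equiv.Perm.isThreeCycle_swap_mul_swap_same hab hac hbc
  refine ⟨Equiv.swap a b * Equiv.swap a c, h3c, ?_⟩
  intro x hx
  have hsub : (Equiv.swap a b * Equiv.swap a c).support ⊆ {a, b, c} := by
    refine le_trans (Equiv.Perm.support_mul_le _ _) ?_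
    rw [Equiv.Perm.support_swap hab, Equiv.Perm.support_swap hac]
    intro y hy
    rcases Finset.mem_union.mp hy with h | h
    · rcases Finset.mem_insert.mp h with h | h
      · exact h ▸ by simp
      · rw [Finset.mem_singleton.mp h]; simp
    · rcases Finset.mem_insert.mp h with h | h
      · exact h ▸ by simp
      · rw [Finset.mem_singleton.mp h]; simp
  have := hsub hx
  rcases Finset.mem_insert.mp this with h | h
  · rw [h]; simp [a]
  · rcases Finset.mem_insert.mp h with h | h
    · rw [h]; simp [b]
    · rw [Finset.mem_singleton.mp h]; simp [c]

lemma sum_support_cycleFactors {n : ℕ} (π : Equiv.Perm (Fin n)) :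
    ∑ c ∈ π.cycleFactorsFinset, c.support.card = π.support.card := by
  rw [← Equiv.Perm.sum_cycleType, Equiv.Perm.cycleType_def]
  rfl

lemma filter_card_eq_count {n : ℕ} (π : Equiv.Perm (Fin n)) (m : ℕ) :
    (π.cycleFactorsFinset.filter fun c => c.support.card = m).card = π.cycleType.count m := by
  rw [Finset.card_def, Finset.filter_val, Equiv.Perm.cycleType_def, Multiset.count_map]
  congr 1
  apply Multiset.filter_congr
  intro c _
  simp [eq_comm]

lemma count_even {n : ℕ} {π : Equiv.Perm (Fin n)} {r : ℕ}
    (h : π.cycleType = Multiset.replicate r 2) (hr : 2 ∣ r) :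
    r.choose (r / 2) ≤ (Fam π r).card := by
  classical
  have hcard : π.cycleFactorsFinset.card = r := by
    have h2 := congrArg Multiset.card h
    rw [Equiv.Perm.cycleType_def, Multiset.card_map, Multiset.card_replicate] at h2
    exact h2
  have hall : ∀ c ∈ π.cycleFactorsFinset, c.support.card = 2 := by
    intro c hc
    have hmem : c.support.card ∈ π.cycleType := by
      rw [Equiv.Perm.cycleType_def]
      simpa using Multiset.mem_map_of_mem (Finset.card ∘ Equiv.Perm.support) (Finset.mem_val.mpr hc)
    rw [h] at hmem
    exact Multiset.eq_of_mem_replicate hmem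
  have hsub : π.cycleFactorsFinset.powersetCard (r / 2) ⊆ Fam π r := by
    intro S hS
    obtain ⟨hSsub, hScard⟩ := Finset.mem_powersetCard.mp hS
    refine Finset.mem_filter.mpr ⟨Finset.mem_powerset.mpr hSsub, ?_⟩
    rw [Finset.sum_congr rfl (fun c hc => hall c (hSsub hc)), Finset.sum_const, hScard,
      smul_eq_mul]
    omega
  calc r.choose (r / 2) = (π.cycleFactorsFinset.powersetCard (r / 2)).card := by
        rw [Finset.card_powersetCard, hcard]
    _ ≤ (Fam π r).card := Finset.card_le_card hsub

lemma count_odd {n : ℕ} {π : Equiv.Perm (Fin n)} {r : ℕ}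
    (h : π.cycleType = Multiset.replicate (r - 3) 2 + {3, 3}) (hr2 : ¬2 ∣ r) (hr3 : 3 ≤ r) :
    2 * ((r - 3).choose ((r - 3) / 2)) ≤ (Fam π r).card := by
  classical
  set T2 := π.cycleFactorsFinset.filter fun c => c.support.card = 2 with hT2
  set T3 := π.cycleFactorsFinset.filter fun c => c.support.card = 3 with hT3
  have hmemT2 : ∀ x ∈ T2, x.support.card = 2 := by
    intro x hx; rw [hT2] at hx; exact (Finset.mem_filter.mp hx).2
  have hmemT3 : ∀ x ∈ T3, x.support.card = 3 := by
    intro x hx; rw [hT3] at hx; exact (Finset.mem_filter.mp hx).2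
  have hT3cf : T3 ⊆ π.cycleFactorsFinset := by rw [hT3]; exact Finset.filter_subset _ _
  have hT2cf : T2 ⊆ π.cycleFactorsFinset := by rw [hT2]; exact Finset.filter_subset _ _
  have hT3card : T3.card = 2 := by
    rw [hT3, filter_card_eq_count, h, Multiset.count_add, Multiset.count_replicate]
    simp
  have hT2card : T2.card = r - 3 := by
    rw [hT2, filter_card_eq_count, h, Multiset.count_add, Multiset.count_replicate]
    simp
  have hmem : ∀ p ∈ (T2.powersetCard ((r - 3) / 2)) ×ˢ T3,
      (fun p : Finset (Equiv.Perm (Fin n)) × Equiv.Perm (Fin n) => insert p.2 p.1) p ∈ Fam π r := by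
    rintro ⟨A, t⟩ hp
    obtain ⟨hA, ht⟩ := Finset.mem_product.mp hp
    obtain ⟨hAsub, hAcard⟩ := Finset.mem_powersetCard.mp hA
    have htcf : t ∈ π.cycleFactorsFinset := hT3cf ht
    have ht3 : t.support.card = 3 := hmemT3 t ht
    have htA : t ∉ A := by
      intro hmem
      have := hmemT2 t (hAsub hmem)
      omega
    refine Finset.mem_filter.mpr ⟨Finset.mem_powerset.mpr ?_, ?_⟩
    · intro x hx
      rcases Finset.mem_insert.mp hx with hxx | hxx
      · exact hxx ▸ htcf
      · exact hT2cf (hAsub hxx)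
    · dsimp only
      rw [Finset.sum_insert htA, ht3]
      have hAsum : ∑ c ∈ A, c.support.card = ∑ _c ∈ A, 2 :=
        Finset.sum_congr rfl fun c hc => hmemT2 c (hAsub hc)
      rw [hAsum, Finset.sum_const, hAcard, smul_eq_mul]
      omega
  have hinj : Set.InjOn
      (fun p : Finset (Equiv.Perm (Fin n)) × Equiv.Perm (Fin n) => insert p.2 p.1)
      ↑((T2.powersetCard ((r - 3) / 2)) ×ˢ T3) := by
    rintro ⟨A, t⟩ hp ⟨A', t'⟩ hp' heq
    dsimp only at heq
    obtain ⟨hA, ht⟩ := Finset.mem_product.mp (Finset.mem_coe.mp hp)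
    obtain ⟨hA', ht'⟩ := Finset.mem_product.mp (Finset.mem_coe.mp hp')
    obtain ⟨hAsub, -⟩ := Finset.mem_powersetCard.mp hA
    obtain ⟨hAsub', -⟩ := Finset.mem_powersetCard.mp hA'
    have ht3 : t.support.card = 3 := hmemT3 t ht
    have ht3' : t'.support.card = 3 := hmemT3 t' ht'
    have htt : t = t' := by
      have h1 : t ∈ insert t' A' := heq ▸ Finset.mem_insert_self t A
      rcases Finset.mem_insert.mp h1 with hxx | hxx
      · exact hxx
      · exfalso
        have := hmemT2 t (hAsub' hxx)
        omega
    subst htt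
    have hAA : A = A' := by
      ext x
      constructor
      · intro hx
        have hx2 : x.support.card = 2 := hmemT2 x (hAsub hx)
        have hxi : x ∈ insert t A' := heq ▸ Finset.mem_insert_of_mem hx
        rcases Finset.mem_insert.mp hxi with hxx | hxx
        · exfalso; rw [hxx] at hx2; omega
        · exact hxx
      · intro hx
        have hx2 : x.support.card = 2 := hmemT2 x (hAsub' hx)
        have hxi : x ∈ insert t A := heq ▸ Finset.mem_insert_of_mem hx
        rcases Finset.mem_insert.mp hxi with hxx | hxx
        · exfalso; rw [hxx] at hx2; omega
        · exact hxx
    rw [Prod.mk.injEq]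
    exact ⟨hAA, rfl⟩
  have hle := Finset.card_le_card_of_injOn _ hmem hinj
  rw [Finset.card_product, Finset.card_powersetCard, hT2card, hT3card] at hle
  calc 2 * ((r - 3).choose ((r - 3) / 2)) = (r - 3).choose ((r - 3) / 2) * 2 := mul_comm _ _
    _ ≤ (Fam π r).card := hle

lemma exists_pi0 (n r : ℕ) (hr : 1 ≤ r) (hn : 2 * r ≤ n) :
    ∃ π : Equiv.Perm (Fin n), π.support.card = 2 * r ∧
      (∀ c ∈ π.cycleType, c = 2 ∨ c = 3) ∧ Mval r ≤ (Fam π r).card := by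
  by_cases hr2 : 2 ∣ r
  · obtain ⟨π, hct, -⟩ := exists_replicate2 n r hn
    refine ⟨π, ?_, ?_, ?_⟩
    · rw [← Equiv.Perm.sum_cycleType, hct, Multiset.sum_replicate, smul_eq_mul]; ring
    · intro c hc; rw [hct] at hc; exact Or.inl (Multiset.eq_of_mem_replicate hc)
    · rw [Mval, if_pos hr2]; exact count_even hct hr2
  · by_cases hr1 : r = 1
    · subst hr1
      obtain ⟨π, hct, -⟩ := exists_replicate2 n 1 hn
      refine ⟨π, ?_, ?_, ?_⟩
      · rw [← Equiv.Perm.sum_cycleType, hct, Multiset.sum_replicate, smul_eq_mul]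
      · intro c hc; rw [hct] at hc; exact Or.inl (Multiset.eq_of_mem_replicate hc)
      · rw [Mval, if_neg hr2, if_pos rfl]; omega
    · have hr3 : 3 ≤ r := by omega
      obtain ⟨π2, hct2, hsup2⟩ := exists_replicate2 n (r - 3) (by omega)
      obtain ⟨c1, hctc1, hsupc1⟩ := exists_three n (2 * (r - 3)) (by omega)
      obtain ⟨c2, hctc2, hsupc2⟩ := exists_three n (2 * (r - 3) + 3) (by omega)
      have hd12 : π2.Disjoint c1 := by
        rw [Equiv.Perm.disjoint_iff_disjoint_support, Finset.disjoint_left]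
        intro x hx hx'
        have h1 := hsup2 x hx
        have h2 := (hsupc1 x hx').1
        omega
      have hd13 : π2.Disjoint c2 := by
        rw [Equiv.Perm.disjoint_iff_disjoint_support, Finset.disjoint_left]
        intro x hx hx'
        have h1 := hsup2 x hx
        have h2 := (hsupc2 x hx').1
        omega
      have hd23 : c1.Disjoint c2 := by
        rw [Equiv.Perm.disjoint_iff_disjoint_support, Finset.disjoint_left]
        intro x hx hx'
        have h1 := (hsupc1 x hx).2
        have h2 := (hsupc2 x hx').1
        omega
      have hdm : (π2 * c1).Disjoint c2 := Equiv.Perm.Disjoint.mul_left hd13 hd23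
      have hct : (π2 * c1 * c2).cycleType = Multiset.replicate (r - 3) 2 + {3, 3} := by
        rw [Equiv.Perm.Disjoint.cycleType_mul hdm, Equiv.Perm.Disjoint.cycleType_mul hd12, hct2, hctc1, hctc2, add_assoc]
        congr 1
      refine ⟨π2 * c1 * c2, ?_, ?_, ?_⟩
      · rw [← Equiv.Perm.sum_cycleType, hct, Multiset.sum_add, Multiset.sum_replicate,
          smul_eq_mul]
        have h6 : ({3, 3} : Multiset ℕ).sum = 6 := rfl
        rw [h6]; omega
      · intro c hc
        rw [hct] at hc
        rcases Multiset.mem_add.mp hc with hcc | hcc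
        · exact Or.inl (Multiset.eq_of_mem_replicate hcc)
        · right
          rcases Multiset.mem_cons.mp hcc with hcc | hcc
          · exact hcc
          · exact Multiset.mem_singleton.mp hcc
      · rw [Mval, if_neg hr2, if_neg hr1]
        exact count_odd hct hr2 hr3


/-- For every `r ≥ 1` and `n ≥ 2r` there is a permutation `π` of `Fin n`
with `|support π| = 2r`, all of whose cycle lengths are `2` or `3`, such that for all
permutations `σ, τ` with `d(σ, τ) = 2r` we have
`|B_r(σ) ∩ B_r(τ)| ≤ |B_r(π) ∩ B_r(1)|`; i.e. the maximum intersection `I(n, 2r, r)` is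
attained at a permutation whose disjoint cycles all have length `2` or `3`. -/
theorem stmt6 (n r : ℕ) (hr : 1 ≤ r) (hn : 2 * r ≤ n) :
    ∃ π : Equiv.Perm (Fin n),
      π.support.card = 2 * r ∧
      (∀ c ∈ π.cycleType, c = 2 ∨ c = 3) ∧
      ∀ σ τ : Equiv.Perm (Fin n), hdist σ τ = 2 * r →
        (pball σ r ∩ pball τ r).card ≤ (pball π r ∩ pball 1 r).card := by
  obtain ⟨π₀, h1, h2, h3⟩ := exists_pi0 n r hr hn
  refine ⟨π₀, h1, h2, fun σ τ hst => ?_⟩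
  have hconj := hdist_mul_right (σ * τ⁻¹) 1 τ
  rw [inv_mul_cancel_right, one_mul] at hconj
  have hsupp : (σ * τ⁻¹).support.card = 2 * r := by
    rw [← hdist_one_right, ← hconj]
    exact hst
  calc (pball σ r ∩ pball τ r).card
      = (pball (σ * τ⁻¹) r ∩ pball 1 r).card := card_inter_reduce σ τ r
    _ ≤ (Fam (σ * τ⁻¹) r).card := upper _ hsupp
    _ ≤ Mval r := by
        have hsum : ∑ c ∈ (σ * τ⁻¹).cycleFactorsFinset, c.support.card = 2 * r := by
          rw [sum_support_cycleFactors, hsupp]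
        exact core (σ * τ⁻¹).cycleFactorsFinset (fun c => c.support.card) r
          (fun c hc => Equiv.Perm.IsCycle.two_le_card_support
            (Equiv.Perm.mem_cycleFactorsFinset_iff.mp hc).1) hsum
    _ ≤ (Fam π₀ r).card := h3
    _ ≤ (pball π₀ r ∩ pball 1 r).card := lower _ h1
end

section
/- For all integers t ≥ 1 and k with 0 ≤ k and 3k ≤ 2t: Σ_{j=0}^{k} C(2t−3k, t−3j) · C(2k, 2j) ≤ C(2t, t). -/
/-!
Raise the second factor: `C(2k, 2j) ≤ C(3k, 3j)`, because `C(2k, 2j) · C(k, j)` is one term of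
Vandermonde's expansion of `C(3k, 3j)`. The summands then become the terms of index `i = 3j` of
Vandermonde's expansion `C(2t, t) = Σ_i C(2t - 3k, t - i) · C(3k, i)`, of which they form a subfamily.
-/

open Finset

namespace Nat

theorem choose_le_add_choose_add {n r a b : ℕ} (hb : b ≤ a) :
    n.choose r ≤ (n + a).choose (r + b) := by
  rw [add_choose_eq]
  have hmem : (r, b) ∈ antidiagonal (r + b) := mem_antidiagonal.mpr rfl
  calc n.choose r = n.choose r * 1 := (mul_one _).symm
    _ ≤ n.choose r * a.choose b := Nat.mul_le_mul_left _ (choose_pos hb)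
    _ ≤ ∑ ij ∈ antidiagonal (r + b), n.choose ij.1 * a.choose ij.2 :=
        single_le_sum (f := fun ij => n.choose ij.1 * a.choose ij.2) (fun _ _ => zero_le _) hmem

theorem sum_choose_sub_mul_choose_le {m n t : ℕ} {s : Finset ℕ} (hs : ∀ i ∈ s, i ≤ t) :
    ∑ i ∈ s, m.choose (t - i) * n.choose i ≤ (m + n).choose t := by
  have vandermonde : (m + n).choose t = ∑ i ∈ range (t + 1), m.choose (t - i) * n.choose i := by
    rw [add_comm, add_choose_eq, Finset.Nat.sum_antidiagonal_eq_sum_range_succ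
      (fun i j => n.choose i * m.choose j)]
    exact sum_congr rfl fun _ _ => mul_comm _ _
  rw [vandermonde]
  exact sum_le_sum_of_subset fun i hi => mem_range_succ_iff.mpr (hs i hi)

end Nat

theorem stmt7_general (t k : ℕ) (hkt : 3 * k ≤ 2 * t) :
    ∑ j ∈ Finset.range (k + 1),
        (if 3 * j ≤ t then
          Nat.choose (2 * t - 3 * k) (t - 3 * j) * Nat.choose (2 * k) (2 * j)
        else 0)
      ≤ Nat.choose (2 * t) t := by
  set m := 2 * t - 3 * k
  set s := (range (k + 1)).filter (fun j => 3 * j ≤ t)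
  calc _ = ∑ j ∈ s, m.choose (t - 3 * j) * (2 * k).choose (2 * j) := (sum_filter _ _).symm
    _ ≤ ∑ j ∈ s, m.choose (t - 3 * j) * (3 * k).choose (3 * j) := by
        refine sum_le_sum fun j hj => Nat.mul_le_mul_left _ ?_
        have hjk : j ≤ k := mem_range_succ_iff.mp (mem_filter.mp hj).1
        convert Nat.choose_le_add_choose_add (n := 2 * k) (r := 2 * j) hjk using 2 <;> ring
    _ = ∑ i ∈ s.image (3 * ·), m.choose (t - i) * (3 * k).choose i := by
        rw [sum_image fun _ _ _ _ h => by omega]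
    _ ≤ (m + 3 * k).choose t :=
        Nat.sum_choose_sub_mul_choose_le fun i hi => by
          obtain ⟨j, hj, rfl⟩ := mem_image.mp hi
          exact (mem_filter.mp hj).2
    _ = (2 * t).choose t := by rw [Nat.sub_add_cancel hkt]

/-- For all `t ≥ 1` and `k ≥ 0` with `3k ≤ 2t`:
`Σ_{j=0}^{k} C(2t-3k, t-3j) · C(2k, 2j) ≤ C(2t, t)`.
Terms where the lower index `t-3j` would be negative are `0`, handled by the guard
`3*j ≤ t`. -/
theorem stmt7 (t k : ℕ) (ht : 1 ≤ t) (hkt : 3 * k ≤ 2 * t) :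
    ∑ j ∈ Finset.range (k + 1),
        (if 3 * j ≤ t then
          Nat.choose (2 * t - 3 * k) (t - 3 * j) * Nat.choose (2 * k) (2 * j)
        else 0)
      ≤ Nat.choose (2 * t) t :=
  stmt7_general t k hkt
end

section
/- Let t ≥ 2 and n ≥ 4t. Then N(n, 4t, 2t) = C(2t, t); that is: (1) for all permutations π, τ of Fin n with d(π, τ) ≥ 4t, |B_{2t}(π) ∩ B_{2t}(τ)| ≤ C(2t, t); and (2) there exist permutations π, τ with d(π, τ) ≥ 4t and |B_{2t}(π) ∩ B_{2t}(τ)| = C(2t, t) (e.g., τ = 1 and π a product of 2t disjoint transpositions). -/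
open Finset Equiv Equiv.Perm

lemma mem_pball {n : ℕ} {π σ : Equiv.Perm (Fin n)} {r : ℕ} :
    σ ∈ pball π r ↔ hdist π σ ≤ r := by
  simp [pball]

lemma invariant_zpow {α : Type*} [DecidableEq α] {g : Equiv.Perm α} {A : Finset α}
    (h : ∀ x, x ∈ A ↔ g x ∈ A) : ∀ (k : ℤ) (x : α), x ∈ A ↔ (g ^ k) x ∈ A := by
  have hinv : ∀ x, x ∈ A ↔ g⁻¹ x ∈ A := by
    intro x
    have := h (g⁻¹ x)
    simpa using this.symm
  intro k
  induction k using Int.induction_on with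
  | zero => simp
  | succ k ih =>
      intro x
      have he : (g ^ ((k : ℤ) + 1)) x = (g ^ (k : ℤ)) (g x) := by
        rw [zpow_add_one, Equiv.Perm.mul_apply]
      rw [he, ← ih (g x)]
      exact h x
  | pred k ih =>
      intro x
      have he : (g ^ (-(k : ℤ) - 1)) x = (g ^ (-(k : ℤ))) (g⁻¹ x) := by
        rw [zpow_sub_one, Equiv.Perm.mul_apply]
      rw [he, ← ih (g⁻¹ x)]
      exact hinv x

lemma ball_bound {n t : ℕ} (π τ : Equiv.Perm (Fin n)) (h : 4 * t ≤ hdist π τ) :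
    (pball π (2*t) ∩ pball τ (2*t)).card ≤ Nat.choose (2*t) t := by
  classical
  set I := pball π (2*t) ∩ pball τ (2*t) with hI
  rcases I.eq_empty_or_nonempty with hIe | hIne
  · simp [hIe]
  set g : Equiv.Perm (Fin n) := π⁻¹ * τ with hg
  have hgapp : ∀ i, g i = π⁻¹ (τ i) := fun i => rfl
  have hDsupp : ∀ i, i ∈ g.support ↔ π i ≠ τ i := by
    intro i
    rw [Equiv.Perm.mem_support]
    constructor
    · intro hne heq
      apply hne
      rw [hgapp, ← heq, Equiv.Perm.inv_def, Equiv.symm_apply_apply]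
    · intro hne heq
      apply hne
      have h3 := congrArg π heq
      rw [hgapp, Equiv.Perm.inv_def, Equiv.apply_symm_apply] at h3
      exact h3.symm
  have hDcard : hdist π τ = g.support.card := by
    unfold hdist
    congr 1
    ext i
    simp [hDsupp i]
  have hD4 : 4*t ≤ g.support.card := hDcard ▸ h
  set Qf : Equiv.Perm (Fin n) → Finset (Fin n) :=
    fun σ => Finset.univ.filter (fun i => τ i ≠ σ i) with hQf
  have key : ∀ σ ∈ I, (Qf σ).card = 2*t ∧ Qf σ ⊆ g.support ∧
      (∀ i ∈ Qf σ, σ i = π i) ∧ (∀ i, i ∉ Qf σ → σ i = τ i) ∧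
      (∀ i, i ∈ Qf σ ↔ g i ∈ Qf σ) ∧ g.support.card = 4*t := by
    intro σ hσ
    have hPb : hdist π σ ≤ 2*t := mem_pball.mp (mem_inter.mp hσ).1
    have hQb : hdist τ σ ≤ 2*t := mem_pball.mp (mem_inter.mp hσ).2
    set Ps : Finset (Fin n) := Finset.univ.filter (fun i => π i ≠ σ i) with hPs
    have hPcard : Ps.card = hdist π σ := rfl
    have hQcard : (Qf σ).card = hdist τ σ := rfl
    have hDsub : g.support ⊆ Ps ∪ Qf σ := by
      intro i hi
      rw [hDsupp] at hi
      simp only [hPs, hQf, mem_union, mem_filter, mem_univ, true_and]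
      by_contra hc
      push_neg at hc
      exact hi (hc.1.trans hc.2.symm)
    have e1 := card_union_add_card_inter Ps (Qf σ)
    have e2 : g.support.card ≤ (Ps ∪ Qf σ).card := card_le_card hDsub
    have hIc : (Ps ∩ Qf σ).card = 0 := by omega
    have hQc : (Qf σ).card = 2*t := by omega
    have hDeq : g.support = Ps ∪ Qf σ := eq_of_subset_of_card_le hDsub (by omega)
    have hdisj : ∀ x, x ∈ Ps → x ∉ Qf σ := by
      intro x hp hq
      have hx : x ∈ Ps ∩ Qf σ := mem_inter.mpr ⟨hp, hq⟩
      rw [card_eq_zero.mp hIc] at hx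
      exact notMem_empty x hx
    have hK1 : ∀ i ∈ Qf σ, σ i = π i := by
      intro i hi
      by_contra hne
      have hip : i ∈ Ps := by
        simp only [hPs, mem_filter, mem_univ, true_and]
        exact fun he => hne he.symm
      exact hdisj i hip hi
    have hK2 : ∀ i, i ∉ Qf σ → σ i = τ i := by
      intro i hi
      simp only [hQf, mem_filter, mem_univ, true_and, not_not] at hi
      exact hi.symm
    have hQsub : Qf σ ⊆ g.support := by
      rw [hDeq]; exact subset_union_right
    have hPs_eq : Ps = g.support \ Qf σ := by
      rw [hDeq]
      ext x
      simp only [mem_sdiff, mem_union]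
      constructor
      · intro hx; exact ⟨Or.inl hx, hdisj x hx⟩
      · rintro ⟨hu, hq⟩
        rcases hu with hx | hx
        · exact hx
        · exact absurd hx hq
    have hstep : ∀ j ∈ Ps, g j ∈ Ps := by
      intro j hj
      have hjD : j ∈ g.support := hDeq ▸ mem_union_left _ hj
      have hjQ : j ∉ Qf σ := hdisj j hj
      have hσj : σ j = τ j := hK2 j hjQ
      have hgjD : g j ∈ g.support := Equiv.Perm.apply_mem_support.mpr hjD
      have hgjQ : g j ∉ Qf σ := by
        intro hmem
        have h1 : σ (g j) = π (g j) := hK1 _ hmem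
        have h2 : π (g j) = τ j := by rw [hgapp, Equiv.Perm.inv_def, Equiv.apply_symm_apply]
        have h3 : σ (g j) = σ j := by rw [h1, h2, hσj]
        have h4 : g j = j := σ.injective h3
        exact (Equiv.Perm.mem_support.mp hjD) h4
      rw [hPs_eq]
      exact mem_sdiff.mpr ⟨hgjD, hgjQ⟩
    have himg : Ps.image g = Ps := by
      apply eq_of_subset_of_card_le
      · intro x hx
        obtain ⟨j, hj, rfl⟩ := mem_image.mp hx
        exact hstep j hj
      · rw [card_image_of_injective _ g.injective]
    have hPiff : ∀ i, i ∈ Ps ↔ g i ∈ Ps := by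
      intro i
      constructor
      · exact hstep i
      · intro hgi
        rw [← himg] at hgi
        obtain ⟨j, hj, hji⟩ := mem_image.mp hgi
        rwa [← g.injective hji]
    have eQ : ∀ x, x ∈ Qf σ ↔ x ∈ g.support ∧ x ∉ Ps := by
      intro x
      constructor
      · intro hx
        refine ⟨hQsub hx, fun hp => hdisj x hp hx⟩
      · rintro ⟨hu, hp⟩
        rw [hDeq] at hu
        rcases mem_union.mp hu with hx | hx
        · exact absurd hx hp
        · exact hx
    have hQiff : ∀ i, i ∈ Qf σ ↔ g i ∈ Qf σ := by
      intro i
      rw [eQ i, eQ (g i)]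
      exact ⟨fun ⟨h1, h2⟩ => ⟨Equiv.Perm.apply_mem_support.mpr h1, fun hp => h2 ((hPiff i).mpr hp)⟩,
        fun ⟨h1, h2⟩ => ⟨Equiv.Perm.apply_mem_support.mp h1, fun hp => h2 ((hPiff i).mp hp)⟩⟩
    exact ⟨hQc, hQsub, hK1, hK2, hQiff, by omega⟩
  obtain ⟨σ₀, hσ₀⟩ := hIne
  have hsupp4 : g.support.card = 4*t := (key σ₀ hσ₀).2.2.2.2.2
  set Φ : Equiv.Perm (Fin n) → Finset (Equiv.Perm (Fin n)) :=
    fun σ => g.cycleFactorsFinset.filter (fun c => c.support ⊆ Qf σ) with hΦ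
  have hrecon : ∀ σ ∈ I, Qf σ = (Φ σ).biUnion (fun c => c.support) := by
    intro σ hσ
    obtain ⟨hcard, hsub, hK1, hK2, hQiff, _⟩ := key σ hσ
    apply Finset.Subset.antisymm
    · intro i hi
      have hiD : i ∈ g.support := hsub hi
      have hc : g.cycleOf i ∈ g.cycleFactorsFinset :=
        Equiv.Perm.cycleOf_mem_cycleFactorsFinset_iff.mpr hiD
      have hss : (g.cycleOf i).support ⊆ Qf σ := by
        intro j hj
        obtain ⟨hsc, _⟩ := Equiv.Perm.mem_support_cycleOf_iff.mp hj
        obtain ⟨k, hk⟩ := hsc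
        rw [← hk]
        exact (invariant_zpow hQiff k i).mp hi
      refine mem_biUnion.mpr ⟨g.cycleOf i, mem_filter.mpr ⟨hc, hss⟩, ?_⟩
      exact Equiv.Perm.mem_support_cycleOf_iff.mpr ⟨Equiv.Perm.SameCycle.refl _ _, hiD⟩
    · intro i hi
      obtain ⟨c, hc, hic⟩ := mem_biUnion.mp hi
      exact (mem_filter.mp hc).2 hic
  have hreflect : ∀ σ ∈ I, ∀ σ' ∈ I, Φ σ ⊆ Φ σ' → σ = σ' := by
    intro σ hσ σ' hσ' hsub
    have hQsub : Qf σ ⊆ Qf σ' := by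
      rw [hrecon σ hσ, hrecon σ' hσ']
      exact biUnion_subset_biUnion_of_subset_left _ hsub
    have hQeq : Qf σ = Qf σ' := eq_of_subset_of_card_le hQsub
      (by rw [(key σ hσ).1, (key σ' hσ').1])
    ext i
    by_cases hi : i ∈ Qf σ
    · have hi' : i ∈ Qf σ' := by rwa [← hQeq]
      rw [(key σ hσ).2.2.1 i hi, (key σ' hσ').2.2.1 i hi']
    · have hi' : i ∉ Qf σ' := by rwa [← hQeq]
      rw [(key σ hσ).2.2.2.1 i hi, (key σ' hσ').2.2.2.1 i hi']
  set K := g.cycleFactorsFinset with hK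
  have hKle : K.card ≤ 2*t := by
    have hct : g.cycleType.card = K.card := by
      simp [Equiv.Perm.cycleType, hK]
    have h2 : g.cycleType.card • 2 ≤ g.cycleType.sum :=
      Multiset.card_nsmul_le_sum (fun x hx => Equiv.Perm.two_le_of_mem_cycleType hx)
    rw [Equiv.Perm.sum_cycleType, hsupp4, hct, smul_eq_mul] at h2
    omega
  set Ψ : Equiv.Perm (Fin n) → Finset {c // c ∈ K} :=
    fun σ => (Φ σ).subtype (· ∈ K) with hΨ
  have hΨreflect : ∀ σ ∈ I, ∀ σ' ∈ I, Ψ σ ⊆ Ψ σ' → σ = σ' := by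
    intro σ hσ σ' hσ' hsub
    apply hreflect σ hσ σ' hσ'
    intro c hc
    have hcK : c ∈ K := (mem_filter.mp hc).1
    have hmem : (⟨c, hcK⟩ : {c // c ∈ K}) ∈ Ψ σ := Finset.mem_subtype.mpr hc
    exact Finset.mem_subtype.mp (hsub hmem)
  have hinj : Set.InjOn Ψ ↑I := fun σ hσ σ' hσ' he =>
    hΨreflect σ hσ σ' hσ' (le_of_eq he)
  have hcardeq : (I.image Ψ).card = I.card := card_image_of_injOn hinj
  have hanti : IsAntichain (· ⊆ ·) ((I.image Ψ : Finset (Finset {c // c ∈ K})) : Set (Finset {c // c ∈ K})) := by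
    intro a ha b hb hne hsub
    simp only [coe_image, Set.mem_image, mem_coe] at ha hb
    obtain ⟨σ, hσ, rfl⟩ := ha
    obtain ⟨σ', hσ', rfl⟩ := hb
    exact hne (by rw [hΨreflect σ hσ σ' hσ' hsub])
  have hsp := IsAntichain.sperner hanti
  rw [Fintype.card_coe] at hsp
  calc I.card = (I.image Ψ).card := hcardeq.symm
    _ ≤ K.card.choose (K.card / 2) := hsp
    _ ≤ (2*t).choose (K.card / 2) := Nat.choose_le_choose _ hKle
    _ ≤ (2*t).choose ((2*t) / 2) := Nat.choose_le_middle _ _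
    _ = (2*t).choose t := by rw [Nat.mul_div_cancel_left t (by norm_num)]

/-- auxiliary function on ℕ: swap `2j ↔ 2j+1` for `j ∈ T`. -/
def eN (t : ℕ) (T : Finset ℕ) (i : ℕ) : ℕ :=
  if i < 4*t ∧ i / 2 ∈ T then (if i % 2 = 0 then i + 1 else i - 1) else i

lemma eN_lt {n t : ℕ} (hn : 4*t ≤ n) (T : Finset ℕ) {i : ℕ} (h : i < n) :
    eN t T i < n := by
  unfold eN
  split_ifs <;> omega

lemma eN_invol (t : ℕ) (T : Finset ℕ) (i : ℕ) : eN t T (eN t T i) = i := by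
  unfold eN
  by_cases h1 : i < 4*t ∧ i/2 ∈ T
  · by_cases h2 : i % 2 = 0
    · rw [if_pos h1, if_pos h2]
      have hd : (i+1)/2 = i/2 := by omega
      rw [if_pos ⟨by omega, by rw [hd]; exact h1.2⟩,
        if_neg (by omega : ¬ (i+1) % 2 = 0)]
      omega
    · rw [if_pos h1, if_neg h2]
      have hd : (i-1)/2 = i/2 := by omega
      rw [if_pos ⟨by omega, by rw [hd]; exact h1.2⟩,
        if_pos (by omega : (i-1) % 2 = 0)]
      omega
  · rw [if_neg h1, if_neg h1]

/-- the permutation of `Fin n` swapping the pair `{2j, 2j+1}` for each `j ∈ T`. -/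
def swapPerm (n t : ℕ) (hn : 4*t ≤ n) (T : Finset ℕ) : Equiv.Perm (Fin n) :=
  Function.Involutive.toPerm (fun i => ⟨eN t T i.val, eN_lt hn T i.isLt⟩)
    (fun i => Fin.ext (eN_invol t T i.val))

lemma swapPerm_apply {n t : ℕ} (hn : 4*t ≤ n) (T : Finset ℕ) (i : Fin n) :
    ((swapPerm n t hn T) i : ℕ) = eN t T i.val := rfl

lemma swapPerm_empty {n t : ℕ} (hn : 4*t ≤ n) : swapPerm n t hn ∅ = 1 := by
  apply Equiv.ext
  intro i
  apply Fin.ext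
  rw [swapPerm_apply]
  simp [eN]

lemma eN_ne (t : ℕ) (T1 T2 : Finset ℕ) (v : ℕ) :
    eN t T1 v ≠ eN t T2 v ↔
      (v < 4*t ∧ ((v/2 ∈ T1 ∧ v/2 ∉ T2) ∨ (v/2 ∈ T2 ∧ v/2 ∉ T1))) := by
  unfold eN
  by_cases hv : v < 4*t
  · by_cases hm1 : v/2 ∈ T1 <;> by_cases hm2 : v/2 ∈ T2 <;>
      by_cases he : v % 2 = 0 <;> simp [hv, hm1, hm2, he] <;> omega
  · simp [hv]

lemma card_filter_div (t : ℕ) (S : Finset ℕ) (hS : ∀ a ∈ S, a < 2*t) (n : ℕ) (hn : 4*t ≤ n) :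
    ((Finset.univ : Finset (Fin n)).filter
      (fun (i : Fin n) => (i : ℕ) < 4*t ∧ (i : ℕ)/2 ∈ S)).card = 2 * S.card := by
  have hA : ((Finset.univ : Finset (Fin n)).filter
      (fun (i : Fin n) => (i : ℕ) < 4*t ∧ (i : ℕ)/2 ∈ S)).card
      = ((range n).filter (fun i => i < 4*t ∧ i/2 ∈ S)).card := by
    refine Finset.card_nbij (fun i => (i : ℕ)) ?_ ?_ ?_
    · intro i hi
      simp only [mem_coe, mem_filter, mem_univ, true_and, mem_range] at *
      exact ⟨i.isLt, hi⟩
    · intro x _ y _ hxy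
      exact Fin.val_injective hxy
    · intro a ha
      simp only [coe_filter, Set.mem_setOf_eq, mem_range, Set.mem_image, mem_coe,
        mem_univ, true_and] at ha ⊢
      exact ⟨⟨a, ha.1⟩, ha.2, rfl⟩
  have hB : ((range n).filter (fun i => i < 4*t ∧ i/2 ∈ S)).card = (S ×ˢ range 2).card := by
    refine Finset.card_nbij' (fun i => (i/2, i%2)) (fun p => 2*p.1+p.2) ?_ ?_ ?_ ?_
    · intro i hi
      simp only [mem_coe, mem_filter, mem_range] at hi
      simp only [mem_coe, mem_product, mem_range]
      exact ⟨hi.2.2, by omega⟩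
    · intro p hp
      simp only [mem_coe, mem_product, mem_range] at hp
      have h1 := hS p.1 hp.1
      simp only [mem_coe, mem_filter, mem_range]
      refine ⟨by omega, by omega, ?_⟩
      have h2 : (2*p.1+p.2)/2 = p.1 := by omega
      rw [h2]; exact hp.1
    · intro i _
      simp only
      omega
    · intro p hp
      simp only [mem_coe, mem_product, mem_range] at hp
      have h2 : (2*p.1+p.2)/2 = p.1 ∧ (2*p.1+p.2)%2 = p.2 := by omega
      rw [Prod.ext_iff]
      exact ⟨h2.1, h2.2⟩
  rw [hA, hB, card_product, card_range]
  ring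

lemma hdist_swapPerm {n t : ℕ} (hn : 4*t ≤ n) (T1 T2 : Finset ℕ)
    (h1 : ∀ a ∈ T1, a < 2*t) (h2 : ∀ a ∈ T2, a < 2*t) :
    hdist (swapPerm n t hn T1) (swapPerm n t hn T2) = 2 * ((T1 \ T2) ∪ (T2 \ T1)).card := by
  unfold hdist
  rw [← card_filter_div t ((T1 \ T2) ∪ (T2 \ T1)) (by
    intro a ha
    rcases mem_union.mp ha with h | h
    · exact h1 a (mem_sdiff.mp h).1
    · exact h2 a (mem_sdiff.mp h).1) n hn]
  apply congrArg Finset.card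
  apply filter_congr
  intro i _
  have hne : swapPerm n t hn T1 i ≠ swapPerm n t hn T2 i ↔
      eN t T1 i.val ≠ eN t T2 i.val := by
    rw [Ne, Ne, Fin.ext_iff, swapPerm_apply, swapPerm_apply]
  rw [hne, eN_ne]
  simp only [mem_union, mem_sdiff]

/-- `N(n, d, r)`: the maximum of `|B_r(π) ∩ B_r(τ)|` over pairs of permutations of
`Fin n` at Hamming distance at least `d`. -/
def Nmax (n d r : ℕ) : ℕ :=
  (Finset.univ.filter fun p : Equiv.Perm (Fin n) × Equiv.Perm (Fin n) =>
      d ≤ hdist p.1 p.2).sup fun p => (pball p.1 r ∩ pball p.2 r).card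

/-- For `t ≥ 2` and `n ≥ 4t`, `N(n, 4t, 2t) = C(2t, t)`; that is,
(1) every pair at distance `≥ 4t` has `|B_{2t}(π) ∩ B_{2t}(τ)| ≤ C(2t, t)`, and
(2) some pair at distance `≥ 4t` attains this value. -/
theorem stmt8 (n t : ℕ) (ht : 2 ≤ t) (hn : 4 * t ≤ n) :
    Nmax n (4 * t) (2 * t) = Nat.choose (2 * t) t ∧
    (∀ π τ : Equiv.Perm (Fin n), 4 * t ≤ hdist π τ →
        (pball π (2 * t) ∩ pball τ (2 * t)).card ≤ Nat.choose (2 * t) t) ∧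
    (∃ π τ : Equiv.Perm (Fin n), 4 * t ≤ hdist π τ ∧
        (pball π (2 * t) ∩ pball τ (2 * t)).card = Nat.choose (2 * t) t) := by
  classical
  have hF : ∀ a ∈ Finset.range (2*t), a < 2*t := fun a ha => Finset.mem_range.mp ha
  set π : Equiv.Perm (Fin n) := swapPerm n t hn (Finset.range (2*t)) with hπ
  set τ : Equiv.Perm (Fin n) := (1 : Equiv.Perm (Fin n)) with hτ
  have hπτ : hdist π τ = 4*t := by
    rw [hπ, hτ, ← swapPerm_empty hn, hdist_swapPerm hn _ ∅ hF (by simp)]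
    rw [Finset.sdiff_empty, Finset.empty_sdiff, Finset.union_empty, Finset.card_range]
    ring
  have hTfacts : ∀ T ∈ Finset.powersetCard t (Finset.range (2*t)),
      swapPerm n t hn T ∈ pball π (2*t) ∩ pball τ (2*t) := by
    intro T hT
    obtain ⟨hsub, hcard⟩ := Finset.mem_powersetCard.mp hT
    have hTb : ∀ a ∈ T, a < 2*t := fun a ha => Finset.mem_range.mp (hsub ha)
    rw [Finset.mem_inter, mem_pball, mem_pball]
    constructor
    · rw [hπ, hdist_swapPerm hn _ T hF hTb]
      have h1 : T \ Finset.range (2*t) = ∅ := by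
        rw [Finset.sdiff_eq_empty_iff_subset]; exact hsub
      rw [h1, Finset.union_empty, Finset.card_sdiff_of_subset hsub, Finset.card_range, hcard]
      omega
    · rw [hτ, ← swapPerm_empty hn, hdist_swapPerm hn ∅ T (by simp) hTb]
      rw [Finset.empty_sdiff, Finset.sdiff_empty, Finset.empty_union]
      omega
  have hinj : Set.InjOn (fun T => swapPerm n t hn T)
      ↑(Finset.powersetCard t (Finset.range (2*t))) := by
    intro T hT T' hT' heq
    simp only [Finset.mem_coe, Finset.mem_powersetCard] at hT hT'
    have hTb : ∀ a ∈ T, a < 2*t := fun a ha => Finset.mem_range.mp (hT.1 ha)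
    have hTb' : ∀ a ∈ T', a < 2*t := fun a ha => Finset.mem_range.mp (hT'.1 ha)
    have h0 : hdist (swapPerm n t hn T) (swapPerm n t hn T') = 0 := by
      simp only at heq
      rw [heq]
      simp [hdist]
    rw [hdist_swapPerm hn T T' hTb hTb'] at h0
    have he : (T \ T') ∪ (T' \ T) = ∅ := Finset.card_eq_zero.mp (by omega)
    have h1 : T \ T' = ∅ := by
      have := Finset.union_eq_empty.mp he
      exact this.1
    have h2 : T' \ T = ∅ := (Finset.union_eq_empty.mp he).2
    exact Finset.Subset.antisymm (Finset.sdiff_eq_empty_iff_subset.mp h1)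
      (Finset.sdiff_eq_empty_iff_subset.mp h2)
  have hge : Nat.choose (2*t) t ≤ (pball π (2*t) ∩ pball τ (2*t)).card := by
    have := Finset.card_le_card_of_injOn (fun T => swapPerm n t hn T) hTfacts hinj
    rwa [Finset.card_powersetCard, Finset.card_range] at this
  have hex : 4 * t ≤ hdist π τ := by omega
  have hcards : (pball π (2*t) ∩ pball τ (2*t)).card = Nat.choose (2*t) t :=
    le_antisymm (ball_bound π τ hex) hge
  refine ⟨?_, fun π' τ' h => ball_bound π' τ' h, π, τ, hex, hcards⟩
  apply le_antisymm
  · apply Finset.sup_le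
    intro p hp
    exact ball_bound p.1 p.2 (Finset.mem_filter.mp hp).2
  · have hmem : ((π, τ) : Equiv.Perm (Fin n) × Equiv.Perm (Fin n)) ∈
        Finset.univ.filter (fun p : Equiv.Perm (Fin n) × Equiv.Perm (Fin n) =>
          4 * t ≤ hdist p.1 p.2) := Finset.mem_filter.mpr ⟨Finset.mem_univ _, hex⟩
    have hle := Finset.le_sup (f := fun p : Equiv.Perm (Fin n) × Equiv.Perm (Fin n) =>
      (pball p.1 (2 * t) ∩ pball p.2 (2 * t)).card) hmem
    exact le_trans (le_of_eq hcards.symm) hle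
end

section
/- Let t ≥ 2 and n ≥ 4t + 2. Then N(n, 4t+2, 2t+1) = 2 · C(2t−2, t−1); that is: (1) for all permutations π, τ of Fin n with d(π, τ) ≥ 4t+2, |B_{2t+1}(π) ∩ B_{2t+1}(τ)| ≤ 2 · C(2t−2, t−1); and (2) there exist permutations π, τ with d(π, τ) ≥ 4t+2 attaining this value (e.g., τ = 1 and π a product of two disjoint 3-cycles and 2t−2 disjoint transpositions). -/
open Finset

variable {ι : Type*} [DecidableEq ι]

lemma eq_of_subset_of_sum_eq {J J' : Finset ι} (w : ι → ℕ) (h : J ⊆ J')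
    (hw : ∀ c ∈ J', 1 ≤ w c) (hs : ∑ c ∈ J, w c = ∑ c ∈ J', w c) : J = J' := by
  have h0 := Finset.sum_sdiff (f := w) h
  have : ∑ c ∈ J' \ J, w c = 0 := by omega
  have hempty : J' \ J = ∅ := by
    by_contra hne
    obtain ⟨x, hx⟩ := Finset.nonempty_iff_ne_empty.mpr hne
    have hx' := Finset.mem_sdiff.mp hx
    have := Finset.sum_eq_zero_iff.mp this x hx
    have := hw x hx'.1
    omega
  exact Finset.Subset.antisymm h (fun x hx => by
    by_contra hxJ
    exact absurd (Finset.mem_sdiff.mpr ⟨hx, hxJ⟩) (by simp [hempty]))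

lemma central_mono_s9 {a b : ℕ} (h : a ≤ b) : a.choose (a/2) ≤ b.choose (b/2) :=
  le_trans (Nat.choose_le_choose _ h) (Nat.choose_le_middle _ _)

/-- Sperner-type bound: the number of subsets of `G` with a fixed positive-weight sum. -/
lemma fixedSum_card_le (G : Finset ι) (w : ι → ℕ) (hw : ∀ c ∈ G, 1 ≤ w c) (s : ℕ) :
    ((G.powerset.filter fun J => ∑ c ∈ J, w c = s)).card ≤ G.card.choose (G.card / 2) := by
  classical
  set ℬ := G.powerset.filter fun J => ∑ c ∈ J, w c = s with hℬ
  have hmem : ∀ J ∈ ℬ, J ⊆ G ∧ ∑ c ∈ J, w c = s := by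
    intro J hJ
    rw [hℬ, Finset.mem_filter, Finset.mem_powerset] at hJ
    exact hJ
  set f : Finset ι → Finset {x // x ∈ G} := fun J => J.subtype _ with hf
  have hfinj : ∀ J ⊆ G, ∀ J' ⊆ G, f J = f J' → J = J' := by
    intro J hJ J' hJ' hff
    have h1 : (f J).map (Function.Embedding.subtype _) = J := by
      rw [hf]; simp only [Finset.subtype_map]
      exact Finset.filter_true_of_mem (fun x hx => hJ hx)
    have h2 : (f J').map (Function.Embedding.subtype _) = J' := by
      rw [hf]; simp only [Finset.subtype_map]
      exact Finset.filter_true_of_mem (fun x hx => hJ' hx)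
    rw [← h1, ← h2, hff]
  set ℬ' : Finset (Finset {x // x ∈ G}) := ℬ.image f with hℬ'
  have hcard : ℬ.card = ℬ'.card := by
    rw [hℬ']
    exact (Finset.card_image_of_injOn (fun J hJ J' hJ' hff =>
      hfinj J (hmem J hJ).1 J' (hmem J' hJ').1 hff)).symm
  have hanti : IsAntichain (· ⊆ ·) (ℬ' : Set (Finset {x // x ∈ G})) := by
    intro A hA B hB hne hAB
    simp only [hℬ', Finset.coe_image, Set.mem_image, Finset.mem_coe] at hA hB
    obtain ⟨J, hJ, rfl⟩ := hA
    obtain ⟨J', hJ', rfl⟩ := hB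
    have hsub : J ⊆ J' := by
      intro x hx
      have hxG : x ∈ G := (hmem J hJ).1 hx
      have : (⟨x, hxG⟩ : {x // x ∈ G}) ∈ f J := by
        rw [hf]; exact Finset.mem_subtype.mpr hx
      have := hAB this
      rw [hf] at this
      exact Finset.mem_subtype.mp this
    have : J = J' := eq_of_subset_of_sum_eq w hsub
      (fun c hc => hw c ((hmem J' hJ').1 hc))
      (by rw [(hmem J hJ).2, (hmem J' hJ').2])
    exact hne (by rw [this])
  have := IsAntichain.sperner hanti
  rwa [Fintype.card_coe, ← hcard] at this

lemma choose_final (t : ℕ) (ht : 2 ≤ t) :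
    (2*t-1).choose ((2*t-1)/2) ≤ 2 * Nat.choose (2*t-2) (t-1) := by
  obtain ⟨u, rfl⟩ : ∃ u, t = u + 2 := ⟨t - 2, by omega⟩
  have h1 : 2*(u+2)-1 = (2*u+2)+1 := by omega
  have h2 : (2*(u+2)-1)/2 = u+1 := by omega
  have h3 : 2*(u+2)-2 = 2*u+2 := by omega
  have h4 : (u+2)-1 = u+1 := by omega
  rw [h2, h1, h3, h4, Nat.choose_succ_succ]
  simp only [Nat.succ_eq_add_one]
  have : (2*u+2).choose u ≤ (2*u+2).choose ((2*u+2)/2) := Nat.choose_le_middle _ _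
  have h5 : (2*u+2)/2 = u+1 := by omega
  rw [h5] at this
  omega

omit [DecidableEq ι] in
lemma sum_mod_two (J : Finset ι) (w : ι → ℕ) :
    (∑ c ∈ J, w c) % 2 = (J.filter fun c => w c % 2 = 1).card % 2 := by
  classical
  rw [Finset.sum_nat_mod]
  congr 1
  rw [← Finset.sum_filter_add_sum_filter_not J (fun c => w c % 2 = 1)]
  have h1 : ∑ c ∈ J.filter (fun c => w c % 2 = 1), w c % 2
      = (J.filter fun c => w c % 2 = 1).card := by
    rw [Finset.card_eq_sum_ones]
    exact Finset.sum_congr rfl (fun x hx => (Finset.mem_filter.mp hx).2)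
  have h2 : ∑ c ∈ J.filter (fun c => ¬ w c % 2 = 1), w c % 2 = 0 := by
    apply Finset.sum_eq_zero
    intro x hx
    have := (Finset.mem_filter.mp hx).2
    omega
  omega

lemma erase_bound (F : Finset ι) (w : ι → ℕ) (hw1 : ∀ c ∈ F, 1 ≤ w c) (o o' : ι)
    (ho : o ∈ F) (ho' : o' ∈ F) (hne : o' ≠ o) (s : ℕ) (ℬ : Finset (Finset ι))
    (hB : ∀ J ∈ ℬ, J ⊆ F ∧ ∑ c ∈ J, w c = s ∧ o ∈ J ∧ o' ∉ J) :
    ℬ.card ≤ (F.card - 2).choose ((F.card - 2)/2) := by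
  classical
  set G := (F.erase o).erase o' with hG
  have hGcard : G.card = F.card - 2 := by
    rw [hG, Finset.card_erase_of_mem (Finset.mem_erase.mpr ⟨hne, ho'⟩),
      Finset.card_erase_of_mem ho]
    omega
  have hle : ℬ.card ≤ (G.powerset.filter fun J => ∑ c ∈ J, w c = s - w o).card := by
    apply Finset.card_le_card_of_injOn (fun J => J.erase o)
    · intro J hJ
      obtain ⟨hJF, hJs, hoJ, ho'J⟩ := hB J hJ
      rw [Finset.mem_coe, Finset.mem_filter, Finset.mem_powerset]
      constructor
      · intro x hx
        rw [Finset.mem_erase] at hx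
        rw [hG, Finset.mem_erase, Finset.mem_erase]
        exact ⟨fun h => ho'J (h ▸ hx.2), hx.1, hJF hx.2⟩
      · have hadd := Finset.add_sum_erase J w hoJ
        have hwole : w o ≤ s := hJs ▸ Finset.single_le_sum (fun c _ => Nat.zero_le (w c)) hoJ
        show ∑ c ∈ J.erase o, w c = s - w o
        omega
    · intro J hJ J' hJ' heq
      have h1 := (hB J hJ).2.2.1
      have h2 := (hB J' hJ').2.2.1
      have heq' : J.erase o = J'.erase o := heq
      rw [← Finset.insert_erase h1, ← Finset.insert_erase h2, heq']
  refine le_trans hle (le_trans (fixedSum_card_le G w (fun c hc => ?_) _) (by rw [hGcard]))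
  exact hw1 c (Finset.mem_of_mem_erase (Finset.mem_of_mem_erase hc))

lemma extremal (t : ℕ) (ht : 2 ≤ t) (F : Finset ι) (w : ι → ℕ)
    (hw : ∀ c ∈ F, 2 ≤ w c) (hsum : ∑ c ∈ F, w c = 4*t+2) :
    (F.powerset.filter fun J => ∑ c ∈ J, w c = 2*t+1).card
      ≤ 2 * Nat.choose (2*t-2) (t-1) := by
  classical
  set 𝒜 := F.powerset.filter fun J => ∑ c ∈ J, w c = 2*t+1 with h𝒜
  have hmem : ∀ J ∈ 𝒜, J ⊆ F ∧ ∑ c ∈ J, w c = 2*t+1 := fun J hJ => by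
    rw [h𝒜, Finset.mem_filter, Finset.mem_powerset] at hJ; exact hJ
  set O := F.filter (fun c => w c % 2 = 1) with hO
  have hOF : O ⊆ F := Finset.filter_subset _ _
  have hOcard : O.card % 2 = 0 := by
    have h1 := sum_mod_two F w
    rw [hsum, ← hO] at h1
    omega
  have hJO : ∀ J ∈ 𝒜, (J.filter fun c => w c % 2 = 1).card % 2 = 1 := by
    intro J hJ
    have h1 := sum_mod_two J w
    rw [(hmem J hJ).2] at h1
    omega
  have hJOsub : ∀ J ∈ 𝒜, (J.filter fun c => w c % 2 = 1) ⊆ O := by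
    intro J hJ x hx
    rw [Finset.mem_filter] at hx ⊢
    exact ⟨(hmem J hJ).1 hx.1, hx.2⟩
  -- sum over O is at least 3 * |O|
  have hsumO : 3 * O.card ≤ ∑ c ∈ O, w c := by
    calc 3 * O.card = O.card • 3 := by rw [smul_eq_mul]; ring
    _ ≤ ∑ c ∈ O, w c := Finset.card_nsmul_le_sum O w 3 (fun x hx => by
        have h1 : w x % 2 = 1 := by
          have hx' := hx; rw [hO, Finset.mem_filter] at hx'; exact hx'.2
        have h2 := hw x (hOF hx)
        omega)
  have hsplit : ∑ c ∈ O, w c + ∑ c ∈ F.filter (fun c => ¬ w c % 2 = 1), w c = 4*t+2 := by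
    rw [hO, Finset.sum_filter_add_sum_filter_not, hsum]
  have hrest : 2 * (F.filter (fun c => ¬ w c % 2 = 1)).card
      ≤ ∑ c ∈ F.filter (fun c => ¬ w c % 2 = 1), w c := by
    calc 2 * (F.filter (fun c => ¬ w c % 2 = 1)).card
        = (F.filter (fun c => ¬ w c % 2 = 1)).card • 2 := by rw [smul_eq_mul]; ring
    _ ≤ _ := Finset.card_nsmul_le_sum _ w 2 (fun x hx => hw x (Finset.filter_subset _ _ hx))
  have hcards : O.card + (F.filter (fun c => ¬ w c % 2 = 1)).card = F.card := by
    rw [hO]; exact Finset.card_filter_add_card_filter_not _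
  by_cases hO0 : O.card = 0
  · have : 𝒜 = ∅ := by
      rw [Finset.eq_empty_iff_forall_notMem]
      intro J hJ
      have h1 := hJO J hJ
      have h2 := Finset.card_le_card (hJOsub J hJ)
      omega
    simp [this]
  by_cases hO2 : O.card = 2
  · obtain ⟨o1, o2, hne, hOe⟩ := Finset.card_eq_two.mp hO2
    have ho1 : o1 ∈ O := by rw [hOe]; simp
    have ho2 : o2 ∈ O := by rw [hOe]; simp
    have hFcard : F.card ≤ 2*t := by
      have h6 : 6 ≤ ∑ c ∈ O, w c := by omega
      omega
    -- each J ∈ 𝒜 contains exactly one of o1, o2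
    have hkey : ∀ J ∈ 𝒜, (o1 ∈ J ∧ o2 ∉ J) ∨ (o2 ∈ J ∧ o1 ∉ J) := by
      intro J hJ
      have h1 := hJO J hJ
      have hsub := hJOsub J hJ
      have h2 := Finset.card_le_card hsub
      rw [hOe] at h2
      rw [Finset.card_insert_of_notMem (by simp [hne]), Finset.card_singleton] at h2
      have h3 : (J.filter fun c => w c % 2 = 1).card = 1 := by omega
      obtain ⟨x, hx⟩ := Finset.card_eq_one.mp h3
      have hxJ : x ∈ J.filter fun c => w c % 2 = 1 := by rw [hx]; simp
      have hxO : x ∈ O := hJOsub J hJ hxJ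
      rw [hOe, Finset.mem_insert, Finset.mem_singleton] at hxO
      have hw1 : w o1 % 2 = 1 := by
        have h' := ho1; rw [hO, Finset.mem_filter] at h'; exact h'.2
      have hw2 : w o2 % 2 = 1 := by
        have h' := ho2; rw [hO, Finset.mem_filter] at h'; exact h'.2
      have hiff1 : o1 ∈ J ↔ o1 = x := by
        constructor
        · intro h; have : o1 ∈ J.filter fun c => w c % 2 = 1 :=
            Finset.mem_filter.mpr ⟨h, hw1⟩
          rw [hx, Finset.mem_singleton] at this; exact this
        · intro h; rw [h]; exact (Finset.mem_filter.mp hxJ).1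
      have hiff2 : o2 ∈ J ↔ o2 = x := by
        constructor
        · intro h; have : o2 ∈ J.filter fun c => w c % 2 = 1 :=
            Finset.mem_filter.mpr ⟨h, hw2⟩
          rw [hx, Finset.mem_singleton] at this; exact this
        · intro h; rw [h]; exact (Finset.mem_filter.mp hxJ).1
      rcases hxO with h | h
      · left; exact ⟨hiff1.mpr h.symm, fun hc => hne ((hiff2.mp hc).trans h).symm⟩
      · right; exact ⟨hiff2.mpr h.symm, fun hc => hne ((hiff1.mp hc).trans h)⟩
    have hsplit𝒜 : 𝒜.card = (𝒜.filter fun J => o1 ∈ J).card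
        + (𝒜.filter fun J => ¬ o1 ∈ J).card :=
      (Finset.card_filter_add_card_filter_not _).symm
    have hb1 : (𝒜.filter fun J => o1 ∈ J).card ≤ (F.card - 2).choose ((F.card - 2)/2) := by
      apply erase_bound F w (fun c hc => by have := hw c hc; omega) o1 o2
        (hOF ho1) (hOF ho2) hne.symm (2*t+1)
      intro J hJ
      rw [Finset.mem_filter] at hJ
      obtain ⟨hJ𝒜, hoJ⟩ := hJ
      rcases hkey J hJ𝒜 with h | h
      · exact ⟨(hmem J hJ𝒜).1, (hmem J hJ𝒜).2, hoJ, h.2⟩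
      · exact absurd hoJ h.2
    have hb2 : (𝒜.filter fun J => ¬ o1 ∈ J).card ≤ (F.card - 2).choose ((F.card - 2)/2) := by
      apply erase_bound F w (fun c hc => by have := hw c hc; omega) o2 o1
        (hOF ho2) (hOF ho1) hne (2*t+1)
      intro J hJ
      rw [Finset.mem_filter] at hJ
      obtain ⟨hJ𝒜, hoJ⟩ := hJ
      rcases hkey J hJ𝒜 with h | h
      · exact absurd h.1 hoJ
      · exact ⟨(hmem J hJ𝒜).1, (hmem J hJ𝒜).2, h.1, hoJ⟩
    have hCM : (F.card - 2).choose ((F.card - 2)/2) ≤ (2*t-2).choose (t-1) := by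
      have h1 := central_mono_s9 (show F.card - 2 ≤ 2*t-2 by omega)
      have h2 : (2*t-2)/2 = t-1 := by omega
      rwa [h2] at h1
    omega
  · -- |O| ≥ 4
    have hO4 : 4 ≤ O.card := by omega
    have hFcard : F.card ≤ 2*t - 1 := by omega
    have h1 : 𝒜.card ≤ F.card.choose (F.card / 2) :=
      fixedSum_card_le F w (fun c hc => by have := hw c hc; omega) _
    have h2 := central_mono_s9 (show F.card ≤ 2*t-1 by omega)
    have h3 := choose_final t ht
    omega

lemma invariant_pow {n : ℕ} (ρ : Equiv.Perm (Fin n)) (S : Finset (Fin n))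
    (hS : ∀ i ∈ S, ρ i ∈ S) : ∀ i, (ρ i ∈ S ↔ i ∈ S) := by
  have himg : S.image ρ = S := by
    apply Finset.eq_of_subset_of_card_le
    · intro x hx
      obtain ⟨j, hj, rfl⟩ := Finset.mem_image.mp hx
      exact hS j hj
    · rw [Finset.card_image_of_injective _ ρ.injective]
  intro i
  constructor
  · intro h
    rw [← himg] at h
    obtain ⟨j, hj, hji⟩ := Finset.mem_image.mp h
    rwa [← ρ.injective hji]
  · exact hS i

lemma invariant_sameCycle {n : ℕ} (ρ : Equiv.Perm (Fin n)) (S : Finset (Fin n))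
    (hS : ∀ i ∈ S, ρ i ∈ S) : ∀ i ∈ S, ∀ j, ρ.SameCycle i j → j ∈ S := by
  have hiff := invariant_pow ρ S hS
  have hpow : ∀ (m : ℕ) (i : Fin n), i ∈ S → (ρ^m) i ∈ S := by
    intro m
    induction m with
    | zero => intro i hi; simpa using hi
    | succ k ih =>
      intro i hi
      rw [pow_succ', Equiv.Perm.mul_apply]
      exact (hiff _).mpr (ih i hi)
  have hpow' : ∀ (m : ℕ) (j : Fin n), (ρ^m) j ∈ S → j ∈ S := by
    intro m
    induction m with
    | zero => intro j hj; simpa using hj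
    | succ k ih =>
      intro j hj
      rw [pow_succ', Equiv.Perm.mul_apply] at hj
      exact ih j ((hiff _).mp hj)
  intro i hi j hij
  obtain ⟨k, hk⟩ := hij
  match k with
  | Int.ofNat m =>
    rw [Int.ofNat_eq_coe, zpow_natCast] at hk
    exact hk ▸ hpow m i hi
  | Int.negSucc m =>
    rw [zpow_negSucc] at hk
    apply hpow' (m+1)
    have : (ρ ^ (m+1)) j = i := by
      rw [← hk]
      exact Equiv.apply_symm_apply _ _
    rwa [this]

lemma struct {n t : ℕ} {ρ σ : Equiv.Perm (Fin n)} (hρ : 4*t+2 ≤ hdist ρ 1)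
    (h1 : hdist ρ σ ≤ 2*t+1) (h2 : hdist 1 σ ≤ 2*t+1) :
    (∀ i, σ i ≠ i → σ i = ρ i) ∧ (∀ i, σ i ≠ i → ρ i ≠ i) ∧
    (∀ i, σ i ≠ i → σ (ρ i) ≠ ρ i) ∧
    (Finset.univ.filter fun i => σ i ≠ i).card = 2*t+1 ∧ hdist ρ 1 = 4*t+2 := by
  classical
  set A := Finset.univ.filter fun i : Fin n => ρ i ≠ (1 : Equiv.Perm (Fin n)) i with hA
  set D1 := Finset.univ.filter fun i : Fin n => (1 : Equiv.Perm (Fin n)) i ≠ σ i with hD1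
  set D2 := Finset.univ.filter fun i : Fin n => ρ i ≠ σ i with hD2
  have hAcard : A.card = hdist ρ 1 := rfl
  have hD1card : D1.card = hdist 1 σ := rfl
  have hD2card : D2.card = hdist ρ σ := rfl
  have hsub : A ⊆ D1 ∪ D2 := by
    intro i hi
    rw [hA, Finset.mem_filter] at hi
    rw [Finset.mem_union, hD1, hD2, Finset.mem_filter, Finset.mem_filter]
    by_contra hc
    push_neg at hc
    obtain ⟨hc1, hc2⟩ := hc
    exact hi.2 ((hc2 (Finset.mem_univ i)).trans (hc1 (Finset.mem_univ i)).symm)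
  have hck := Finset.card_union_add_card_inter D1 D2
  have hle1 := Finset.card_le_card hsub
  have hle2 := Finset.card_union_le D1 D2
  have hAeq : A = D1 ∪ D2 := Finset.eq_of_subset_of_card_le hsub (by omega)
  have hinter : D1 ∩ D2 = ∅ := Finset.card_eq_zero.mp (by omega)
  have hmemD1 : ∀ i : Fin n, i ∈ D1 ↔ σ i ≠ i := by
    intro i
    rw [hD1, Finset.mem_filter]
    simp [ne_comm]
  have hmemD2 : ∀ i : Fin n, i ∈ D2 ↔ ρ i ≠ σ i := by
    intro i; rw [hD2, Finset.mem_filter]; simp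
  have hmemA : ∀ i : Fin n, i ∈ A ↔ ρ i ≠ i := by
    intro i; rw [hA, Finset.mem_filter]; simp
  have hC1 : ∀ i, σ i ≠ i → σ i = ρ i := by
    intro i hi
    have hiD1 : i ∈ D1 := (hmemD1 i).mpr hi
    have : i ∉ D2 := by
      intro hc
      have : i ∈ D1 ∩ D2 := Finset.mem_inter.mpr ⟨hiD1, hc⟩
      rw [hinter] at this
      exact absurd this (Finset.notMem_empty i)
    have := (hmemD2 i).not.mp this  -- ¬ ρ i ≠ σ i
    push_neg at this
    exact this.symm
  have hC2 : ∀ i, σ i ≠ i → ρ i ≠ i := by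
    intro i hi
    have hiA : i ∈ A := hAeq ▸ Finset.mem_union_left _ ((hmemD1 i).mpr hi)
    exact (hmemA i).mp hiA
  have hC3 : ∀ i, σ i ≠ i → σ (ρ i) ≠ ρ i := by
    intro i hi hc
    have h1' := hC1 i hi
    have : σ (ρ i) = σ i := by rw [hc, h1']
    exact hC2 i hi (σ.injective this)
  have hD1f : D1 = Finset.univ.filter fun i => σ i ≠ i := by
    ext i
    rw [hmemD1, Finset.mem_filter]
    simp
  have hcards : D1.card = 2*t+1 ∧ hdist ρ 1 = 4*t+2 := by
    constructor <;> omega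
  exact ⟨hC1, hC2, hC3, hD1f ▸ hcards.1, hcards.2⟩

lemma upper_s9 {n t : ℕ} (t2 : 2 ≤ t) {ρ : Equiv.Perm (Fin n)} (hρ : 4*t+2 ≤ hdist ρ 1) :
    (pball ρ (2*t+1) ∩ pball 1 (2*t+1)).card ≤ 2 * Nat.choose (2*t-2) (t-1) := by
  classical
  rcases Finset.eq_empty_or_nonempty (pball ρ (2*t+1) ∩ pball 1 (2*t+1)) with he | ⟨σ0, hσ0⟩
  · simp [he]
  have hget : ∀ σ ∈ pball ρ (2*t+1) ∩ pball 1 (2*t+1),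
      hdist ρ σ ≤ 2*t+1 ∧ hdist 1 σ ≤ 2*t+1 := by
    intro σ hσ
    rw [Finset.mem_inter, pball, pball, Finset.mem_filter, Finset.mem_filter] at hσ
    exact ⟨hσ.1.2, hσ.2.2⟩
  have hA4 : hdist ρ 1 = 4*t+2 :=
    (struct hρ (hget σ0 hσ0).1 (hget σ0 hσ0).2).2.2.2.2
  -- the family of invariant subsets
  set 𝒮 := (ρ.support.powerset).filter
    (fun S => (∀ i ∈ S, ρ i ∈ S) ∧ S.card = 2*t+1) with h𝒮
  have step1 : (pball ρ (2*t+1) ∩ pball 1 (2*t+1)).card ≤ 𝒮.card := by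
    apply Finset.card_le_card_of_injOn (fun σ => Finset.univ.filter fun i => σ i ≠ i)
    · intro σ hσ
      obtain ⟨hC1, hC2, hC3, hC4, _⟩ := struct hρ (hget σ hσ).1 (hget σ hσ).2
      rw [h𝒮, Finset.mem_coe, Finset.mem_filter, Finset.mem_powerset]
      refine ⟨?_, ?_, hC4⟩
      · intro i hi
        rw [Finset.mem_filter] at hi
        exact Equiv.Perm.mem_support.mpr (hC2 i hi.2)
      · intro i hi
        rw [Finset.mem_filter] at hi ⊢
        exact ⟨Finset.mem_univ _, hC3 i hi.2⟩
    · intro σ hσ σ' hσ' heq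
      have heq' : (Finset.univ.filter fun i => σ i ≠ i)
          = (Finset.univ.filter fun i => σ' i ≠ i) := heq
      obtain ⟨hC1, _, _, _, _⟩ := struct hρ (hget σ hσ).1 (hget σ hσ).2
      obtain ⟨hC1', _, _, _, _⟩ := struct hρ (hget σ' hσ').1 (hget σ' hσ').2
      apply Equiv.ext
      intro i
      by_cases hi : σ i = i
      · have : i ∉ Finset.univ.filter fun i => σ i ≠ i := by simp [hi]
        rw [heq'] at this
        simp only [Finset.mem_filter, Finset.mem_univ, true_and, not_not] at this
        rw [hi, this]
      · have hi' : i ∈ Finset.univ.filter fun i => σ' i ≠ i := by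
          rw [← heq']; simp [hi]
        simp only [Finset.mem_filter, Finset.mem_univ, true_and] at hi'
        rw [hC1 i hi, hC1' i hi']
  set 𝒥 := (ρ.cycleFactorsFinset.powerset).filter
    (fun J => ∑ c ∈ J, c.support.card = 2*t+1) with h𝒥
  have hdisjsupp : ∀ c ∈ ρ.cycleFactorsFinset, ∀ d ∈ ρ.cycleFactorsFinset, c ≠ d →
      Disjoint c.support d.support := by
    intro c hc d hd hcd
    exact Equiv.Perm.Disjoint.disjoint_support
      (Equiv.Perm.cycleFactorsFinset_pairwise_disjoint ρ hc hd hcd)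
  have hSrec : ∀ S ∈ 𝒮,
      S = (ρ.cycleFactorsFinset.filter fun c => c.support ⊆ S).biUnion
        (fun c => c.support) := by
    intro S hS
    rw [h𝒮, Finset.mem_filter, Finset.mem_powerset] at hS
    obtain ⟨hSsub, hSinv, _⟩ := hS
    apply Finset.Subset.antisymm
    · intro i hi
      have hisupp : i ∈ ρ.support := hSsub hi
      have hcyc : ρ.cycleOf i ∈ ρ.cycleFactorsFinset :=
        Equiv.Perm.cycleOf_mem_cycleFactorsFinset_iff.mpr hisupp
      have hcsub : (ρ.cycleOf i).support ⊆ S := by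
        intro j hj
        have := (Equiv.Perm.mem_support_cycleOf_iff.mp hj).1
        exact invariant_sameCycle ρ S hSinv i hi j this
      apply Finset.mem_biUnion.mpr
      exact ⟨ρ.cycleOf i, Finset.mem_filter.mpr ⟨hcyc, hcsub⟩,
        Equiv.Perm.mem_support_cycleOf_iff.mpr ⟨Equiv.Perm.SameCycle.refl _ _, hisupp⟩⟩
    · intro i hi
      obtain ⟨c, hc, hic⟩ := Finset.mem_biUnion.mp hi
      exact (Finset.mem_filter.mp hc).2 hic
  have step2 : 𝒮.card ≤ 𝒥.card := by
    apply Finset.card_le_card_of_injOn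
      (fun S => ρ.cycleFactorsFinset.filter fun c => c.support ⊆ S)
    · intro S hS
      have hrec := hSrec S hS
      rw [h𝒮, Finset.mem_coe, Finset.mem_filter, Finset.mem_powerset] at hS
      rw [h𝒥, Finset.mem_coe, Finset.mem_filter, Finset.mem_powerset]
      refine ⟨Finset.filter_subset _ _, ?_⟩
      have hcb := Finset.card_biUnion (s := ρ.cycleFactorsFinset.filter
          fun c => c.support ⊆ S) (t := fun c => c.support)
        (fun c hc d hd hcd => hdisjsupp c (Finset.mem_filter.mp hc).1
          d (Finset.mem_filter.mp hd).1 hcd)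
      rw [← hcb, ← hrec]
      exact hS.2.2
    · intro S hS S' hS' heq
      have heq' : (ρ.cycleFactorsFinset.filter fun c => c.support ⊆ S)
          = (ρ.cycleFactorsFinset.filter fun c => c.support ⊆ S') := heq
      rw [hSrec S hS, hSrec S' hS', heq']
  have step3 : 𝒥.card ≤ 2 * Nat.choose (2*t-2) (t-1) := by
    apply extremal t t2 ρ.cycleFactorsFinset (fun c => c.support.card)
    · intro c hc
      exact Equiv.Perm.IsCycle.two_le_card_support
        ((Equiv.Perm.mem_cycleFactorsFinset_iff.mp hc).1)
    · have hsupp : ρ.support = ρ.cycleFactorsFinset.biUnion (fun c => c.support) := by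
        ext x
        rw [Finset.mem_biUnion]
        exact Equiv.Perm.mem_support_iff_mem_support_of_mem_cycleFactorsFinset
      have hcb := Finset.card_biUnion (s := ρ.cycleFactorsFinset)
        (t := fun c => c.support) hdisjsupp
      have hsuppcard : ρ.support.card = hdist ρ 1 := by
        rw [hdist]
        congr 1
      rw [← hcb, ← hsupp, hsuppcard, hA4]
  omega

def gfun (m x : ℕ) : ℕ :=
  if x = 2 then 0 else if x = 5 then 3 else if x < 6 then x + 1
  else if x < m then (if x % 2 = 0 then x + 1 else x - 1) else x

def gifun (m x : ℕ) : ℕ :=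
  if x = 0 then 2 else if x = 3 then 5 else if x < 6 then x - 1
  else if x < m then (if x % 2 = 0 then x + 1 else x - 1) else x

lemma gfun_lt {m n x : ℕ} (hmn : m ≤ n) (hm6 : 6 ≤ m) (hm2 : m % 2 = 0) (hx : x < n) :
    gfun m x < n := by
  unfold gfun; split_ifs <;> omega

lemma gifun_lt {m n x : ℕ} (hmn : m ≤ n) (hm6 : 6 ≤ m) (hm2 : m % 2 = 0) (hx : x < n) :
    gifun m x < n := by
  unfold gifun; split_ifs <;> omega

lemma gifun_gfun {m x : ℕ} (hm2 : m % 2 = 0) (hm6 : 6 ≤ m) : gifun m (gfun m x) = x := by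
  unfold gfun
  split_ifs <;> (unfold gifun; split_ifs <;> (try contradiction) <;> omega)

lemma gfun_gifun {m x : ℕ} (hm2 : m % 2 = 0) (hm6 : 6 ≤ m) : gfun m (gifun m x) = x := by
  unfold gifun
  split_ifs <;> (unfold gfun; split_ifs <;> (try contradiction) <;> omega)

lemma gfun_ne {m x : ℕ} (hm2 : m % 2 = 0) (hm6 : 6 ≤ m) : gfun m x ≠ x ↔ x < m := by
  unfold gfun; split_ifs <;> omega

def rhoPerm (n m : ℕ) (hmn : m ≤ n) (hm6 : 6 ≤ m) (hm2 : m % 2 = 0) :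
    Equiv.Perm (Fin n) where
  toFun := fun i => ⟨gfun m i.val, gfun_lt hmn hm6 hm2 i.isLt⟩
  invFun := fun i => ⟨gifun m i.val, gifun_lt hmn hm6 hm2 i.isLt⟩
  left_inv := fun i => Fin.ext (gifun_gfun hm2 hm6)
  right_inv := fun i => Fin.ext (gfun_gifun hm2 hm6)

lemma card_filter_val_lt (n m : ℕ) (h : m ≤ n) :
    (Finset.univ.filter fun i : Fin n => i.val < m).card = m := by
  have : (Finset.univ.filter fun i : Fin n => i.val < m)
      = (Finset.univ : Finset (Fin m)).image (Fin.castLE h) := by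
    ext i
    simp only [Finset.mem_filter, Finset.mem_univ, true_and, Finset.mem_image]
    constructor
    · intro hi
      exact ⟨⟨i.val, hi⟩, rfl⟩
    · rintro ⟨j, rfl⟩
      exact j.isLt
  rw [this, Finset.card_image_of_injective _ (Fin.castLE_injective h)]
  simp

lemma hdist_rho (n m : ℕ) (hmn : m ≤ n) (hm6 : 6 ≤ m) (hm2 : m % 2 = 0) :
    hdist (rhoPerm n m hmn hm6 hm2) 1 = m := by
  have hfe : (Finset.univ.filter fun i : Fin n =>
      (rhoPerm n m hmn hm6 hm2) i ≠ (1 : Equiv.Perm (Fin n)) i)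
      = (Finset.univ.filter fun i : Fin n => i.val < m) := by
    apply Finset.filter_congr
    intro i _
    rw [Equiv.Perm.one_apply, Ne, Fin.ext_iff, ← Ne]
    exact gfun_ne hm2 hm6
  rw [hdist, hfe, card_filter_val_lt n m hmn]

lemma sigma_exists {n : ℕ} (ρ : Equiv.Perm (Fin n)) (S : Finset (Fin n))
    (hinv : ∀ i ∈ S, ρ i ∈ S) :
    ∃ σ : Equiv.Perm (Fin n), ∀ i, σ i = if i ∈ S then ρ i else i := by
  classical
  set f : Fin n → Fin n := fun i => if i ∈ S then ρ i else i with hf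
  have hinj : Function.Injective f := by
    intro i j hij
    simp only [hf] at hij
    by_cases hi : i ∈ S <;> by_cases hj : j ∈ S
    · rw [if_pos hi, if_pos hj] at hij; exact ρ.injective hij
    · rw [if_pos hi, if_neg hj] at hij; exact absurd (hij ▸ hinv i hi) hj
    · rw [if_neg hi, if_pos hj] at hij
      exfalso; apply hi; rw [hij]; exact hinv j hj
    · rw [if_neg hi, if_neg hj] at hij; exact hij
  exact ⟨Equiv.ofBijective f (Finite.injective_iff_bijective.mp hinj), fun i => rfl⟩

noncomputable def sigmaPerm {n : ℕ} (ρ : Equiv.Perm (Fin n)) (S : Finset (Fin n)) :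
    Equiv.Perm (Fin n) :=
  if h : ∀ i ∈ S, ρ i ∈ S then (sigma_exists ρ S h).choose else 1

lemma sigmaPerm_apply {n : ℕ} {ρ : Equiv.Perm (Fin n)} {S : Finset (Fin n)}
    (h : ∀ i ∈ S, ρ i ∈ S) (i : Fin n) :
    sigmaPerm ρ S i = if i ∈ S then ρ i else i := by
  rw [sigmaPerm, dif_pos h]
  exact (sigma_exists ρ S h).choose_spec i

lemma sigma_props {n r : ℕ} (ρ : Equiv.Perm (Fin n)) (S : Finset (Fin n))
    (hinv : ∀ i ∈ S, ρ i ∈ S) (hne : ∀ i ∈ S, ρ i ≠ i)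
    (hcard : S.card = r) (hsupp : hdist ρ 1 = 2*r) :
    sigmaPerm ρ S ∈ pball ρ r ∩ pball 1 r ∧
    (Finset.univ.filter fun i => sigmaPerm ρ S i ≠ i) = S := by
  classical
  set σ := sigmaPerm ρ S with hσ
  have happ := sigmaPerm_apply hinv
  have hfix : (Finset.univ.filter fun i => σ i ≠ i) = S := by
    ext i
    rw [Finset.mem_filter]
    constructor
    · rintro ⟨-, h⟩
      by_contra hiS
      exact h ((happ i).trans (if_neg hiS))
    · intro hiS
      refine ⟨Finset.mem_univ _, ?_⟩
      rw [(happ i).trans (if_pos hiS)]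
      exact hne i hiS
  have hd1 : hdist 1 σ = r := by
    rw [hdist, ← hcard, ← hfix]
    congr 1
    apply Finset.filter_congr
    intro i _
    rw [Equiv.Perm.one_apply]
    exact ne_comm
  have hSA : S ⊆ Finset.univ.filter fun i : Fin n => ρ i ≠ (1 : Equiv.Perm (Fin n)) i := by
    intro i hi
    rw [Finset.mem_filter, Equiv.Perm.one_apply]
    exact ⟨Finset.mem_univ _, hne i hi⟩
  have hd2 : hdist ρ σ = r := by
    have hfe : (Finset.univ.filter fun i => ρ i ≠ σ i)
        = (Finset.univ.filter fun i : Fin n => ρ i ≠ (1 : Equiv.Perm (Fin n)) i) \ S := by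
      ext i
      rw [Finset.mem_filter, Finset.mem_sdiff, Finset.mem_filter, Equiv.Perm.one_apply]
      constructor
      · rintro ⟨-, h⟩
        have hiS : i ∉ S := by
          intro hiS
          exact h ((happ i).trans (if_pos hiS)).symm
        refine ⟨⟨Finset.mem_univ _, ?_⟩, hiS⟩
        intro hc
        exact h (((happ i).trans (if_neg hiS)).trans hc.symm).symm
      · rintro ⟨⟨-, h⟩, hiS⟩
        refine ⟨Finset.mem_univ _, ?_⟩
        intro hc
        exact h (hc.trans ((happ i).trans (if_neg hiS)))
    have hsd := Finset.card_sdiff_of_subset hSA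
    rw [hdist, hfe, hsd, hcard]
    have : (Finset.univ.filter fun i : Fin n =>
        ρ i ≠ (1 : Equiv.Perm (Fin n)) i).card = 2*r := hsupp
    omega
  refine ⟨Finset.mem_inter.mpr ⟨?_, ?_⟩, hfix⟩
  · rw [pball, Finset.mem_filter]
    exact ⟨Finset.mem_univ _, le_of_eq hd2⟩
  · rw [pball, Finset.mem_filter]
    exact ⟨Finset.mem_univ _, le_of_eq hd1⟩

def SsetD (n m : ℕ) (b : Bool) (K : Finset ℕ) : Finset (Fin n) :=
  Finset.univ.filter (fun i : Fin n =>
    (b = false ∧ i.val < 3) ∨ (b = true ∧ 3 ≤ i.val ∧ i.val < 6) ∨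
    (6 ≤ i.val ∧ i.val < m ∧ (i.val - 6)/2 ∈ K))

lemma mem_SsetD {n m : ℕ} {b : Bool} {K : Finset ℕ} {i : Fin n} :
    i ∈ SsetD n m b K ↔
    ((b = false ∧ i.val < 3) ∨ (b = true ∧ 3 ≤ i.val ∧ i.val < 6) ∨
    (6 ≤ i.val ∧ i.val < m ∧ (i.val - 6)/2 ∈ K)) := by
  rw [SsetD, Finset.mem_filter]
  exact and_iff_right (Finset.mem_univ i)

lemma SsetD_inv {n m : ℕ} (hmn : m ≤ n) (hm6 : 6 ≤ m) (hm2 : m % 2 = 0)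
    (b : Bool) (K : Finset ℕ) :
    ∀ i ∈ SsetD n m b K, (rhoPerm n m hmn hm6 hm2) i ∈ SsetD n m b K := by
  intro i hi
  rw [mem_SsetD] at hi ⊢
  have hval : ((rhoPerm n m hmn hm6 hm2) i).val = gfun m i.val := rfl
  rw [hval]
  rcases hi with ⟨hb, h3⟩ | ⟨hb, h36⟩ | ⟨h6, hlt, hK⟩
  · exact Or.inl ⟨hb, by unfold gfun; split_ifs <;> omega⟩
  · exact Or.inr (Or.inl ⟨hb, by unfold gfun; split_ifs <;> omega⟩)
  · have hg : 6 ≤ gfun m i.val ∧ gfun m i.val < m ∧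
        (gfun m i.val - 6)/2 = (i.val - 6)/2 := by
      unfold gfun; split_ifs <;> (try contradiction) <;>
        (refine ⟨by omega, by omega, by omega⟩)
    exact Or.inr (Or.inr ⟨hg.1, hg.2.1, by rw [hg.2.2]; exact hK⟩)

lemma SsetD_ne {n m : ℕ} (hmn : m ≤ n) (hm6 : 6 ≤ m) (hm2 : m % 2 = 0)
    (b : Bool) (K : Finset ℕ) :
    ∀ i ∈ SsetD n m b K, (rhoPerm n m hmn hm6 hm2) i ≠ i := by
  intro i hi
  rw [mem_SsetD] at hi
  intro hc
  have hval : gfun m i.val = i.val := congrArg Fin.val hc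
  have hlt : i.val < m := by rcases hi with ⟨_, h⟩ | ⟨_, _, h⟩ | ⟨_, h, _⟩ <;> omega
  exact ((gfun_ne hm2 hm6).mpr hlt) hval

def EsetD (K : Finset ℕ) (b : Bool) : Finset ℕ :=
  (if b then ({3,4,5} : Finset ℕ) else {0,1,2}) ∪ K.biUnion (fun k => {6+2*k, 7+2*k})

lemma EsetD_lt {m : ℕ} (hm6 : 6 ≤ m) {K : Finset ℕ} (hK : ∀ k ∈ K, 7+2*k < m)
    (b : Bool) : ∀ x ∈ EsetD K b, x < m := by
  intro x hx
  rw [EsetD, Finset.mem_union] at hx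
  rcases hx with hx | hx
  · have : x < 6 := by cases b <;> (simp at hx; omega)
    omega
  · obtain ⟨k, hk, hxk⟩ := Finset.mem_biUnion.mp hx
    have := hK k hk
    simp at hxk
    omega

lemma EsetD_card (K : Finset ℕ) (b : Bool) : (EsetD K b).card = 3 + 2 * K.card := by
  classical
  have htri : (if b then ({3,4,5} : Finset ℕ) else {0,1,2}).card = 3 := by
    cases b <;> decide
  have hdisj : Disjoint (if b then ({3,4,5} : Finset ℕ) else {0,1,2})
      (K.biUnion fun k => {6+2*k, 7+2*k}) := by
    rw [Finset.disjoint_left]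
    intro x hx hx'
    obtain ⟨k, hk, hxk⟩ := Finset.mem_biUnion.mp hx'
    have h1 : x < 6 := by cases b <;> (simp at hx; omega)
    simp at hxk
    omega
  have hpair : ∀ k ∈ K, ∀ l ∈ K, k ≠ l →
      Disjoint ({6+2*k, 7+2*k} : Finset ℕ) {6+2*l, 7+2*l} := by
    intro k _ l _ hkl
    rw [Finset.disjoint_left]
    intro x hx hx'
    simp at hx hx'
    omega
  rw [EsetD, Finset.card_union_of_disjoint hdisj, htri, Finset.card_biUnion hpair]
  have h2 : ∀ k ∈ K, ({6+2*k, 7+2*k} : Finset ℕ).card = 2 := by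
    intro k _
    rw [Finset.card_insert_of_notMem (by simp), Finset.card_singleton]
  rw [Finset.sum_congr rfl h2, Finset.sum_const, smul_eq_mul]
  ring

lemma SsetD_eq {n m : ℕ} (hn0 : 0 < n) (hmn : m ≤ n) (hm6 : 6 ≤ m)
    (b : Bool) (K : Finset ℕ) (hK : ∀ k ∈ K, 7+2*k < m) :
    SsetD n m b K = (EsetD K b).image
      (fun x => (⟨x % n, Nat.mod_lt x hn0⟩ : Fin n)) := by
  ext i
  rw [mem_SsetD, Finset.mem_image]
  constructor
  · intro hi
    have hilt : i.val < m := by rcases hi with ⟨_, h⟩ | ⟨_, _, h⟩ | ⟨_, h, _⟩ <;> omega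
    refine ⟨i.val, ?_, Fin.ext (by simp [Nat.mod_eq_of_lt i.isLt])⟩
    rw [EsetD, Finset.mem_union]
    rcases hi with ⟨hb, h3⟩ | ⟨hb, h36⟩ | ⟨h6, hlt, hKk⟩
    · left; rw [hb]; simp; omega
    · left; rw [hb]; simp; omega
    · right
      apply Finset.mem_biUnion.mpr
      refine ⟨(i.val-6)/2, hKk, ?_⟩
      simp
      omega
  · rintro ⟨x, hx, rfl⟩
    have hxm : x < m := EsetD_lt hm6 hK b x hx
    have hxn : x % n = x := Nat.mod_eq_of_lt (lt_of_lt_of_le hxm hmn)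
    rw [EsetD, Finset.mem_union] at hx
    show (b = false ∧ x % n < 3) ∨ (b = true ∧ 3 ≤ x % n ∧ x % n < 6) ∨
      (6 ≤ x % n ∧ x % n < m ∧ (x % n - 6)/2 ∈ K)
    rw [hxn]
    rcases hx with hx | hx
    · cases b
      · simp at hx
        exact Or.inl ⟨rfl, by omega⟩
      · simp at hx
        exact Or.inr (Or.inl ⟨rfl, by omega⟩)
    · obtain ⟨k, hk, hxk⟩ := Finset.mem_biUnion.mp hx
      simp at hxk
      have h7 := hK k hk
      have hdiv : (x - 6)/2 = k := by omega
      exact Or.inr (Or.inr ⟨by omega, hxm, by rw [hdiv]; exact hk⟩)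

lemma SsetD_card {n m : ℕ} (hn0 : 0 < n) (hmn : m ≤ n) (hm6 : 6 ≤ m)
    (b : Bool) (K : Finset ℕ) (hK : ∀ k ∈ K, 7+2*k < m) :
    (SsetD n m b K).card = 3 + 2 * K.card := by
  rw [SsetD_eq hn0 hmn hm6 b K hK, ← EsetD_card K b]
  apply Finset.card_image_of_injOn
  intro x hx y hy hxy
  have hx' : x % n = x := Nat.mod_eq_of_lt (lt_of_lt_of_le (EsetD_lt hm6 hK b x hx) hmn)
  have hy' : y % n = y := Nat.mod_eq_of_lt (lt_of_lt_of_le (EsetD_lt hm6 hK b y hy) hmn)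
  have := congrArg Fin.val hxy
  simp only at this
  omega

lemma lower_s9 {n t : ℕ} (t2 : 2 ≤ t) (hn : 4*t+2 ≤ n) :
    ∃ ρ : Equiv.Perm (Fin n), 4*t+2 ≤ hdist ρ 1 ∧
      2 * Nat.choose (2*t-2) (t-1) ≤ (pball ρ (2*t+1) ∩ pball 1 (2*t+1)).card := by
  classical
  have hmn : 4*t+2 ≤ n := hn
  have hm6 : 6 ≤ 4*t+2 := by omega
  have hm2 : (4*t+2) % 2 = 0 := by omega
  have hn0 : 0 < n := by omega
  set ρ := rhoPerm n (4*t+2) hmn hm6 hm2 with hρdef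
  have hd : hdist ρ 1 = 4*t+2 := hdist_rho n (4*t+2) hmn hm6 hm2
  refine ⟨ρ, le_of_eq hd.symm, ?_⟩
  set D := (Finset.univ : Finset Bool) ×ˢ
    Finset.powersetCard (t-1) (Finset.range (2*t-2)) with hDdef
  have hDcard : D.card = 2 * Nat.choose (2*t-2) (t-1) := by
    rw [hDdef, Finset.card_product, Finset.card_powersetCard, Finset.card_range]
    simp
  have hDfacts : ∀ p : Bool × Finset ℕ, p ∈ D →
      (∀ k ∈ p.2, 7+2*k < 4*t+2) ∧ p.2.card = t-1 := by
    intro p hp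
    rw [hDdef, Finset.mem_product, Finset.mem_powersetCard] at hp
    obtain ⟨-, hsub, hcard⟩ := hp
    refine ⟨fun k hk => ?_, hcard⟩
    have := Finset.mem_range.mp (hsub hk)
    omega
  have hprops : ∀ p : Bool × Finset ℕ, p ∈ D →
      sigmaPerm ρ (SsetD n (4*t+2) p.1 p.2) ∈ pball ρ (2*t+1) ∩ pball 1 (2*t+1) ∧
      (Finset.univ.filter fun i => sigmaPerm ρ (SsetD n (4*t+2) p.1 p.2) i ≠ i)
        = SsetD n (4*t+2) p.1 p.2 := by
    intro p hp
    obtain ⟨hK, hKcard⟩ := hDfacts p hp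
    apply sigma_props ρ (SsetD n (4*t+2) p.1 p.2)
      (SsetD_inv hmn hm6 hm2 p.1 p.2) (SsetD_ne hmn hm6 hm2 p.1 p.2)
    · rw [SsetD_card hn0 hmn hm6 p.1 p.2 hK, hKcard]
      omega
    · rw [hd]
      omega
  rw [← hDcard]
  apply Finset.card_le_card_of_injOn (fun p => sigmaPerm ρ (SsetD n (4*t+2) p.1 p.2))
  · intro p hp
    exact (hprops p hp).1
  · intro p hp p' hp' heq
    have heq' : sigmaPerm ρ (SsetD n (4*t+2) p.1 p.2)
        = sigmaPerm ρ (SsetD n (4*t+2) p'.1 p'.2) := heq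
    have hS : SsetD n (4*t+2) p.1 p.2 = SsetD n (4*t+2) p'.1 p'.2 := by
      rw [← (hprops p hp).2, ← (hprops p' hp').2, heq']
    obtain ⟨hK, -⟩ := hDfacts p hp
    obtain ⟨hK', -⟩ := hDfacts p' hp'
    -- recover b
    have hmem0 : ∀ (b : Bool) (K : Finset ℕ),
        ((⟨0, hn0⟩ : Fin n) ∈ SsetD n (4*t+2) b K) ↔ b = false := by
      intro b K
      rw [mem_SsetD]
      simp only [Fin.val_mk]
      constructor
      · rintro (⟨hb, -⟩ | ⟨-, h, -⟩ | ⟨h, -, -⟩)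
        · exact hb
        · exact absurd h (by omega)
        · exact absurd h (by omega)
      · intro hb
        exact Or.inl ⟨hb, by omega⟩
    have hb : p.1 = p'.1 := by
      have h1 := hmem0 p.1 p.2
      have h2 := hmem0 p'.1 p'.2
      rw [hS] at h1
      rw [h2] at h1
      cases hbb : p.1 <;> cases hbb' : p'.1
      · rfl
      · rw [hbb, hbb'] at h1; simp at h1
      · rw [hbb, hbb'] at h1; simp at h1
      · rfl
    -- recover K
    have hmemk : ∀ (b : Bool) (K : Finset ℕ) (k : ℕ) (hk7 : 7+2*k < 4*t+2),
        ((⟨6+2*k, by omega⟩ : Fin n) ∈ SsetD n (4*t+2) b K) ↔ k ∈ K := by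
      intro b K k hk7
      rw [mem_SsetD]
      simp only [Fin.val_mk]
      have hdiv : (6+2*k - 6)/2 = k := by omega
      constructor
      · rintro (⟨-, h⟩ | ⟨-, -, h⟩ | ⟨-, -, h⟩)
        · exact absurd h (by omega)
        · exact absurd h (by omega)
        · rwa [hdiv] at h
      · intro hkK
        exact Or.inr (Or.inr ⟨by omega, by omega, by rw [hdiv]; exact hkK⟩)
    have hKeq : p.2 = p'.2 := by
      ext k
      constructor
      · intro hk
        have h7 := hK k hk
        have h1 := hmemk p.1 p.2 k h7
        have h2 := hmemk p'.1 p'.2 k h7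
        rw [hS] at h1
        exact h2.mp (h1.mpr hk)
      · intro hk
        have h7 := hK' k hk
        have h1 := hmemk p.1 p.2 k h7
        have h2 := hmemk p'.1 p'.2 k h7
        rw [hS] at h1
        exact h1.mp (h2.mpr hk)
    exact Prod.ext hb hKeq

lemma hdist_mul {n : ℕ} (α π τ : Equiv.Perm (Fin n)) :
    hdist (α * π) (α * τ) = hdist π τ := by
  rw [hdist, hdist]
  congr 1
  apply Finset.filter_congr
  intro i _
  simp [Equiv.Perm.mul_apply, EmbeddingLike.apply_eq_iff_eq]

lemma card_inter_mul {n : ℕ} (α π τ : Equiv.Perm (Fin n)) (r : ℕ) :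
    (pball (α * π) r ∩ pball (α * τ) r).card = (pball π r ∩ pball τ r).card := by
  apply Finset.card_bij (fun σ _ => α⁻¹ * σ)
  · intro σ hσ
    rw [Finset.mem_inter, pball, pball, Finset.mem_filter, Finset.mem_filter] at hσ ⊢
    have h1 : hdist π (α⁻¹ * σ) = hdist (α * π) σ := by
      rw [← hdist_mul α⁻¹ (α * π) σ, ← mul_assoc, inv_mul_cancel, one_mul]
    have h2 : hdist τ (α⁻¹ * σ) = hdist (α * τ) σ := by
      rw [← hdist_mul α⁻¹ (α * τ) σ, ← mul_assoc, inv_mul_cancel, one_mul]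
    exact ⟨⟨Finset.mem_univ _, h1 ▸ hσ.1.2⟩, ⟨Finset.mem_univ _, h2 ▸ hσ.2.2⟩⟩
  · intro σ hσ σ' hσ' heq
    simpa using mul_left_cancel heq
  · intro σ' hσ'
    refine ⟨α * σ', ?_, by rw [← mul_assoc, inv_mul_cancel, one_mul]⟩
    rw [Finset.mem_inter, pball, pball, Finset.mem_filter, Finset.mem_filter] at hσ' ⊢
    rw [hdist_mul α π σ', hdist_mul α τ σ']
    exact ⟨⟨Finset.mem_univ _, hσ'.1.2⟩, ⟨Finset.mem_univ _, hσ'.2.2⟩⟩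

/-- For `t ≥ 2` and `n ≥ 4t + 2`, `N(n, 4t+2, 2t+1) = 2·C(2t-2, t-1)`;
that is, (1) every pair at distance `≥ 4t+2` has
`|B_{2t+1}(π) ∩ B_{2t+1}(τ)| ≤ 2·C(2t-2, t-1)`, and (2) some pair at distance `≥ 4t+2`
attains this value. -/
theorem stmt9 (n t : ℕ) (ht : 2 ≤ t) (hn : 4 * t + 2 ≤ n) :
    Nmax n (4 * t + 2) (2 * t + 1) = 2 * Nat.choose (2 * t - 2) (t - 1) ∧
    (∀ π τ : Equiv.Perm (Fin n), 4 * t + 2 ≤ hdist π τ →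
        (pball π (2 * t + 1) ∩ pball τ (2 * t + 1)).card ≤
          2 * Nat.choose (2 * t - 2) (t - 1)) ∧
    (∃ π τ : Equiv.Perm (Fin n), 4 * t + 2 ≤ hdist π τ ∧
        (pball π (2 * t + 1) ∩ pball τ (2 * t + 1)).card =
          2 * Nat.choose (2 * t - 2) (t - 1)) := by
  have hupp : ∀ π τ : Equiv.Perm (Fin n), 4 * t + 2 ≤ hdist π τ →
      (pball π (2 * t + 1) ∩ pball τ (2 * t + 1)).card ≤
        2 * Nat.choose (2 * t - 2) (t - 1) := by
    intro π τ h
    have h1 : (pball π (2*t+1) ∩ pball τ (2*t+1)).card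
        = (pball (τ⁻¹ * π) (2*t+1) ∩ pball 1 (2*t+1)).card := by
      rw [← card_inter_mul τ⁻¹ π τ (2*t+1), inv_mul_cancel]
    have h2 : 4*t+2 ≤ hdist (τ⁻¹ * π) 1 := by
      rw [show (1 : Equiv.Perm (Fin n)) = τ⁻¹ * τ by rw [inv_mul_cancel],
        hdist_mul τ⁻¹ π τ]
      exact h
    rw [h1]
    exact upper_s9 ht h2
  obtain ⟨ρ, hρ1, hρ2⟩ := lower_s9 ht hn
  have heq : (pball ρ (2*t+1) ∩ pball 1 (2*t+1)).card
      = 2 * Nat.choose (2*t-2) (t-1) := le_antisymm (hupp ρ 1 hρ1) hρ2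
  refine ⟨?_, hupp, ρ, 1, hρ1, heq⟩
  apply le_antisymm
  · apply Finset.sup_le
    intro p hp
    rw [Finset.mem_filter] at hp
    exact hupp p.1 p.2 hp.2
  · calc 2 * Nat.choose (2*t-2) (t-1)
        = (pball ρ (2*t+1) ∩ pball 1 (2*t+1)).card := heq.symm
    _ ≤ Nmax n (4*t+2) (2*t+1) := by
        apply Finset.le_sup (f := fun p : Equiv.Perm (Fin n) × Equiv.Perm (Fin n) =>
          (pball p.1 (2*t+1) ∩ pball p.2 (2*t+1)).card)
          (b := (ρ, 1))
        rw [Finset.mem_filter]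
        exact ⟨Finset.mem_univ _, hρ1⟩
end

section
/- Let r ≥ 2, n ≥ 2r − 1, and let π be a permutation of Fin n with |support π| = 2r − 1. If σ ∈ B_r(π) ∩ B_r(1), then exactly one of the following holds: (i) |support σ| = r − 1 and σ i = π i for every i ∈ support σ; (ii) |support σ| = r and σ i = π i for every i ∈ support σ; (iii) |support σ| = r and |{i ∈ support σ : σ i = π i}| = r − 1. -/
/-- Let `r ≥ 2`, `n ≥ 2r - 1`, and `π` a permutation of `Fin n` with
`|support π| = 2r - 1`. If `σ ∈ B_r(π) ∩ B_r(1)` then exactly one of: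
(i) `|support σ| = r - 1` and `σ` agrees with `π` on `support σ`;
(ii) `|support σ| = r` and `σ` agrees with `π` on `support σ`;
(iii) `|support σ| = r` and exactly `r - 1` points of `support σ` agree with `π`.
(The three cases are mutually exclusive since their defining cardinalities differ.) -/
theorem stmt10 (n r : ℕ) (hr : 2 ≤ r) (hn : 2 * r - 1 ≤ n)
    (π : Equiv.Perm (Fin n)) (hπ : π.support.card = 2 * r - 1)
    (σ : Equiv.Perm (Fin n)) (hσ : σ ∈ pball π r ∩ pball 1 r) :
    (σ.support.card = r - 1 ∧ (∀ i ∈ σ.support, σ i = π i) ∧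
        ¬(σ.support.card = r) ∧
        ¬(σ.support.card = r ∧ (σ.support.filter fun i => σ i = π i).card = r - 1)) ∨
    (σ.support.card = r ∧ (∀ i ∈ σ.support, σ i = π i) ∧
        ¬(σ.support.card = r - 1) ∧
        ¬((σ.support.filter fun i => σ i = π i).card = r - 1)) ∨
    (σ.support.card = r ∧ (σ.support.filter fun i => σ i = π i).card = r - 1 ∧
        ¬(σ.support.card = r - 1) ∧
        ¬(∀ i ∈ σ.support, σ i = π i)) := by
  classical
  rw [Finset.mem_inter] at hσ
  obtain ⟨h1, h2⟩ := hσ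
  rw [pball, Finset.mem_filter] at h1 h2
  have hdπ : hdist π σ ≤ r := h1.2
  have hAr : σ.support.card ≤ r := by
    have he : hdist 1 σ = σ.support.card := by
      unfold hdist
      congr 1
      ext i
      rw [Finset.mem_filter]
      simp [Equiv.Perm.mem_support, ne_comm]
    have := h2.2
    omega
  set agr := σ.support.filter (fun i => σ i = π i) with hagr
  set D := Finset.univ.filter (fun i => π i ≠ σ i) with hD
  have hagrsub : agr ⊆ σ.support := Finset.filter_subset _ _
  have hksub : agr.card ≤ σ.support.card := Finset.card_le_card hagrsub
  -- the two disjoint pieces of the disagreement set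
  have hsub : (π.support \ σ.support) ∪ (σ.support \ agr) ⊆ D := by
    intro i hi
    rw [Finset.mem_union] at hi
    rw [hD, Finset.mem_filter]
    refine ⟨Finset.mem_univ _, ?_⟩
    rcases hi with hi | hi
    · rw [Finset.mem_sdiff, Equiv.Perm.mem_support, Equiv.Perm.notMem_support] at hi
      rw [hi.2]
      exact hi.1
    · rw [Finset.mem_sdiff, hagr, Finset.mem_filter] at hi
      intro h
      exact hi.2 ⟨hi.1, h.symm⟩
  have hdisj : Disjoint (π.support \ σ.support) (σ.support \ agr) := by
    apply Finset.disjoint_left.2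
    intro i hi hi'
    rw [Finset.mem_sdiff] at hi hi'
    exact hi.2 hi'.1
  have hcard : (π.support \ σ.support).card + (σ.support \ agr).card ≤ D.card := by
    rw [← Finset.card_union_of_disjoint hdisj]
    exact Finset.card_le_card hsub
  have hsd1 : π.support.card ≤ (π.support \ σ.support).card + σ.support.card :=
    Finset.card_le_card_sdiff_add_card
  have hsd2 : (σ.support \ agr).card = σ.support.card - agr.card :=
    Finset.card_sdiff_of_subset hagrsub
  have hDr : D.card ≤ r := hdπ
  -- conclude k ≥ r - 1
  have hk : r - 1 ≤ agr.card := by omega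
  have hall : agr.card = σ.support.card → ∀ i ∈ σ.support, σ i = π i := by
    intro h i hi
    have : agr = σ.support := Finset.eq_of_subset_of_card_le hagrsub (le_of_eq h.symm)
    have := this ▸ hi
    rw [hagr, Finset.mem_filter] at this
    exact this.2
  have hnall : agr.card ≠ σ.support.card → ¬(∀ i ∈ σ.support, σ i = π i) := by
    intro h hf
    apply h
    rw [hagr]
    congr 1
    exact Finset.filter_true_of_mem hf
  rcases Nat.lt_or_ge σ.support.card r with ha | ha
  · -- |A| = r - 1, case (i)
    have ha' : σ.support.card = r - 1 := by omega
    have hk' : agr.card = r - 1 := by omega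
    left
    exact ⟨ha', hall (by omega), by omega, fun h => by omega⟩
  · have ha' : σ.support.card = r := by omega
    rcases Nat.lt_or_ge agr.card r with hk' | hk'
    · -- case (iii)
      have hk'' : agr.card = r - 1 := by omega
      right; right
      exact ⟨ha', hk'', by omega, hnall (by omega)⟩
    · -- case (ii)
      have hk'' : agr.card = r := by omega
      right; left
      exact ⟨ha', hall (by omega), by omega, by omega⟩
end

section
/- Let r ≥ 2, n ≥ 2r − 1, and let π be a permutation of Fin n with |support π| = 2r − 1. Define N_1(π) = {σ : |support σ| = r−1 and σ i = π i for all i ∈ support σ}, N_2(π) = {σ : |support σ| = r and σ i = π i for all i ∈ support σ}, and N_3(π) = {σ : |support σ| = r and |{i ∈ support σ : σ i = π i}| = r−1}. Then B_r(π) ∩ B_r(1) is the disjoint union of N_1(π), N_2(π), and N_3(π); in particular |B_r(π) ∩ B_r(1)| = |N_1(π)| + |N_2(π)| + |N_3(π)|. -/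
/-- `N_1(π)`: permutations `σ` with `|support σ| = r - 1` agreeing with `π` on their
support. -/
def N1 {n : ℕ} (r : ℕ) (π : Equiv.Perm (Fin n)) : Finset (Equiv.Perm (Fin n)) :=
  Finset.univ.filter fun σ => σ.support.card = r - 1 ∧ ∀ i ∈ σ.support, σ i = π i

/-- `N_2(π)`: permutations `σ` with `|support σ| = r` agreeing with `π` on their
support. -/
def N2 {n : ℕ} (r : ℕ) (π : Equiv.Perm (Fin n)) : Finset (Equiv.Perm (Fin n)) :=
  Finset.univ.filter fun σ => σ.support.card = r ∧ ∀ i ∈ σ.support, σ i = π i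

/-- `N_3(π)`: permutations `σ` with `|support σ| = r` agreeing with `π` on exactly
`r - 1` points of their support. -/
def N3 {n : ℕ} (r : ℕ) (π : Equiv.Perm (Fin n)) : Finset (Equiv.Perm (Fin n)) :=
  Finset.univ.filter fun σ =>
    σ.support.card = r ∧ (σ.support.filter fun i => σ i = π i).card = r - 1

open Finset Equiv

lemma hdist_one {n : ℕ} (σ : Equiv.Perm (Fin n)) : hdist 1 σ = σ.support.card := by
  unfold hdist
  congr 1
  ext i
  rw [Finset.mem_filter]
  simp [Equiv.Perm.mem_support, eq_comm]

lemma key {n : ℕ} (π σ : Equiv.Perm (Fin n)) :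
    hdist π σ + (σ.support.filter fun i => σ i = π i).card
      + (π.support ∩ σ.support).card = σ.support.card + π.support.card := by
  have hD : (Finset.univ.filter fun i => π i ≠ σ i)
      = (σ.support.filter fun i => ¬ σ i = π i) ∪ (π.support \ σ.support) := by
    ext i
    simp only [mem_filter, mem_union, mem_sdiff, mem_univ, true_and, Equiv.Perm.mem_support]
    by_cases hi : σ i = i
    · simp [hi, eq_comm]
    · simp [hi, eq_comm (a := σ i)]
  have hdisj : Disjoint (σ.support.filter fun i => ¬ σ i = π i) (π.support \ σ.support) :=
    (Finset.disjoint_sdiff.mono_left (filter_subset _ _))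
  have h1 : (σ.support.filter fun i => σ i = π i).card
      + (σ.support.filter fun i => ¬ σ i = π i).card = σ.support.card :=
    Finset.card_filter_add_card_filter_not _
  have h2 : (π.support \ σ.support).card + (π.support ∩ σ.support).card = π.support.card :=
    Finset.card_sdiff_add_card_inter _ _
  unfold hdist
  rw [hD, Finset.card_union_of_disjoint hdisj]
  omega

lemma n3_subset {n r : ℕ} (π σ : Equiv.Perm (Fin n))
    (hS : σ.support.card = r) (hT : (σ.support.filter fun i => σ i = π i).card = r - 1)
    (hr : 2 ≤ r) : σ.support ⊆ π.support := by
  intro j hj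
  by_contra hjA
  have hπj : π j = j := by
    simpa using (Equiv.Perm.notMem_support.mp hjA)
  have hσj : σ j ≠ j := Equiv.Perm.mem_support.mp hj
  set i := σ⁻¹ j with hi
  have hσi : σ i = j := σ.apply_symm_apply j
  have hiS : i ∈ σ.support := by
    rw [← Equiv.Perm.apply_mem_support, hσi]; exact hj
  have hij : i ≠ j := by
    intro h
    rw [h] at hσi
    exact hσj hσi
  have hiT : σ i ≠ π i := by
    intro h
    rw [hσi] at h
    exact hij (π.injective (h.symm.trans hπj.symm))
  have hjT : σ j ≠ π j := by rw [hπj]; exact hσj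
  have hsub : ({i, j} : Finset (Fin n)) ⊆ σ.support \ (σ.support.filter fun i => σ i = π i) := by
    intro x hx
    simp only [mem_insert, mem_singleton] at hx
    rcases hx with rfl | rfl <;> simp [Finset.mem_sdiff, hiS, hj, hiT, hjT]
  have hcard : ({i, j} : Finset (Fin n)).card = 2 := Finset.card_pair hij
  have := Finset.card_le_card hsub
  rw [hcard, Finset.card_sdiff_of_subset (filter_subset _ _), hS, hT] at this
  omega
lemma Tsub {n : ℕ} (π σ : Equiv.Perm (Fin n)) :
    (σ.support.filter fun i => σ i = π i) ⊆ π.support ∩ σ.support := by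
  intro i hi
  simp only [mem_filter, Equiv.Perm.mem_support] at hi
  simp only [mem_inter, Equiv.Perm.mem_support]
  exact ⟨by rw [← hi.2]; exact hi.1, hi.1⟩

/-- For `r ≥ 2`, `n ≥ 2r - 1` and `π` with `|support π| = 2r - 1`, the set
`B_r(π) ∩ B_r(1)` is the disjoint union of `N_1(π)`, `N_2(π)` and `N_3(π)`; in
particular its cardinality is `|N_1(π)| + |N_2(π)| + |N_3(π)|`. -/
theorem stmt11 (n r : ℕ) (hr : 2 ≤ r) (hn : 2 * r - 1 ≤ n)
    (π : Equiv.Perm (Fin n)) (hπ : π.support.card = 2 * r - 1) :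
    pball π r ∩ pball 1 r = N1 r π ∪ N2 r π ∪ N3 r π ∧
    Disjoint (N1 r π) (N2 r π) ∧
    Disjoint (N1 r π) (N3 r π) ∧
    Disjoint (N2 r π) (N3 r π) ∧
    (pball π r ∩ pball 1 r).card = (N1 r π).card + (N2 r π).card + (N3 r π).card := by
  have hset : pball π r ∩ pball 1 r = N1 r π ∪ N2 r π ∪ N3 r π := by
    ext σ
    simp only [pball, N1, N2, N3, mem_inter, mem_union, mem_filter, mem_univ, true_and,
      hdist_one]
    constructor
    · rintro ⟨h1, h2⟩
      have hkey := key π σ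
      have hkm := Finset.card_le_card (Tsub π σ)
      have hmS : (π.support ∩ σ.support).card ≤ σ.support.card :=
        Finset.card_le_card (inter_subset_right)
      have hkS : (σ.support.filter fun i => σ i = π i).card ≤ σ.support.card :=
        Finset.card_le_card (filter_subset _ _)
      by_cases hk : (σ.support.filter fun i => σ i = π i).card = σ.support.card
      · have hTS : (σ.support.filter fun i => σ i = π i) = σ.support :=
          Finset.eq_of_subset_of_card_le (filter_subset _ _) (le_of_eq hk.symm)
        have hag : ∀ i ∈ σ.support, σ i = π i := by
          intro i hi
          have : i ∈ σ.support.filter fun i => σ i = π i := by rw [hTS]; exact hi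
          exact (mem_filter.mp this).2
        have : σ.support.card = r - 1 ∨ σ.support.card = r := by omega
        rcases this with h | h
        · exact Or.inl (Or.inl ⟨h, hag⟩)
        · exact Or.inl (Or.inr ⟨h, hag⟩)
      · refine Or.inr ⟨?_, ?_⟩ <;> omega
    · rintro ((⟨h1, h2⟩ | ⟨h1, h2⟩) | ⟨h1, h2⟩)
      · have hTS : (σ.support.filter fun i => σ i = π i) = σ.support :=
          Finset.filter_true_of_mem h2
        have hkey := key π σ
        have hkm := Finset.card_le_card (Tsub π σ)
        have hmS : (π.support ∩ σ.support).card ≤ σ.support.card :=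
          Finset.card_le_card (inter_subset_right)
        rw [hTS] at hkey hkm
        constructor <;> omega
      · have hTS : (σ.support.filter fun i => σ i = π i) = σ.support :=
          Finset.filter_true_of_mem h2
        have hkey := key π σ
        have hkm := Finset.card_le_card (Tsub π σ)
        have hmS : (π.support ∩ σ.support).card ≤ σ.support.card :=
          Finset.card_le_card (inter_subset_right)
        rw [hTS] at hkey hkm
        constructor <;> omega
      · have hsub := n3_subset π σ h1 h2 hr
        have hm : (π.support ∩ σ.support) = σ.support := Finset.inter_eq_right.mpr hsub
        have hkey := key π σ
        rw [hm] at hkey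
        constructor <;> omega
  have hd12 : Disjoint (N1 r π) (N2 r π) := by
    rw [Finset.disjoint_left]
    intro σ h1 h2
    simp only [N1, N2, mem_filter, mem_univ, true_and] at h1 h2
    omega
  have hd13 : Disjoint (N1 r π) (N3 r π) := by
    rw [Finset.disjoint_left]
    intro σ h1 h2
    simp only [N1, N3, mem_filter, mem_univ, true_and] at h1 h2
    omega
  have hd23 : Disjoint (N2 r π) (N3 r π) := by
    rw [Finset.disjoint_left]
    intro σ h1 h2
    simp only [N2, N3, mem_filter, mem_univ, true_and] at h1 h2
    have hTS : (σ.support.filter fun i => σ i = π i) = σ.support :=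
      Finset.filter_true_of_mem h1.2
    rw [hTS] at h2
    omega
  refine ⟨hset, hd12, hd13, hd23, ?_⟩
  rw [hset, Finset.card_union_of_disjoint (by
      rw [Finset.disjoint_union_left]; exact ⟨hd13, hd23⟩),
    Finset.card_union_of_disjoint hd12]
end

section
/- Let r ≥ 2, n ≥ 2r − 1, let π be a permutation of Fin n with |support π| = 2r − 1, and let σ be a permutation with |support σ| = r. Then |{i ∈ support σ : σ i = π i}| = r − 1 (i.e., σ ∈ N_3(π)) if and only if there exist integers t ≥ 2, s ≥ 1 and pairwise distinct elements y_1, …, y_{t+s} of Fin n such that the cycle (y_1 … y_t) belongs to the disjoint-cycle factorization of σ, the cycle (y_1 … y_t y_{t+1} … y_{t+s}) belongs to the disjoint-cycle factorization of π, and every cycle of σ other than (y_1 … y_t) also belongs to the disjoint-cycle factorization of π. -/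
set_option maxHeartbeats 1000000
open Equiv Equiv.Perm Finset List

-- backward direction as aux lemma
theorem aux_bwd (n r : ℕ) (hr : 2 ≤ r)
    (π : Equiv.Perm (Fin n))
    (σ : Equiv.Perm (Fin n)) (hσ : σ.support.card = r)
    (t s : ℕ) (l : List (Fin n)) (ht : 2 ≤ t) (hs : 1 ≤ s) (hnd : l.Nodup)
    (hlen : l.length = t + s)
    (hc0 : (l.take t).formPerm ∈ σ.cycleFactorsFinset)
    (hlp : l.formPerm ∈ π.cycleFactorsFinset)
    (hrest : ∀ c ∈ σ.cycleFactorsFinset, c ≠ (l.take t).formPerm →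
          c ∈ π.cycleFactorsFinset) :
    (σ.support.filter fun i => σ i = π i).card = r - 1 := by
  have htl : t ≤ l.length := by omega
  have hLnd : (l.take t).Nodup := hnd.sublist (List.take_sublist t l)
  have hLlen : (l.take t).length = t := by simp [List.length_take]; omega
  have hLns : ∀ z : Fin n, l.take t ≠ [z] := by
    intro z hz
    have := congrArg List.length hz
    simp [hLlen] at this; omega
  have hsupp : ((l.take t).formPerm).support = (l.take t).toFinset :=
    List.support_formPerm_of_nodup _ hLnd hLns
  have hlsupp : (l.formPerm).support = l.toFinset :=
    List.support_formPerm_of_nodup _ hnd (by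
      intro z hz; have := congrArg List.length hz; simp [hlen] at this; omega)
  have hc0' := Equiv.Perm.mem_cycleFactorsFinset_iff.mp hc0
  have hlp' := Equiv.Perm.mem_cycleFactorsFinset_iff.mp hlp
  have htm1 : t - 1 < l.length := by omega
  set yt : Fin n := l[t-1] with hyt
  -- yt ∈ σ.support
  have hsc0 : ((l.take t).formPerm).support ⊆ σ.support :=
    Equiv.Perm.mem_cycleFactorsFinset_support_le hc0
  have hytc0 : yt ∈ ((l.take t).formPerm).support := by
    rw [hsupp, List.mem_toFinset]
    have : (l.take t)[t-1]'(by omega) = yt := by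
      rw [List.getElem_take]
    exact this ▸ List.getElem_mem _
  have hyts : yt ∈ σ.support := hsc0 hytc0
  -- key: agreement iff not yt
  have hiff : ∀ i ∈ σ.support, (σ i = π i ↔ i ≠ yt) := by
    intro i hi
    by_cases hiL : i ∈ ((l.take t).formPerm).support
    · -- i in the special cycle
      have hiL' := hiL
      rw [hsupp, List.mem_toFinset, List.mem_iff_getElem] at hiL'
      obtain ⟨j, hj, hji⟩ := hiL'
      rw [hLlen] at hj
      have hjl : j < l.length := by omega
      have hil : i = l[j] := by rw [← hji, List.getElem_take]
      have hσi : σ i = l[(j+1) % t]'(lt_of_lt_of_le (Nat.mod_lt _ (by omega)) (by omega)) := by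
        rw [← (hc0'.2 i hiL), hil]
        have : l[j] = (l.take t)[j]'(by omega) := by rw [List.getElem_take]
        rw [this, List.formPerm_apply_getElem _ hLnd j (by omega)]
        simp only [hLlen]
        rw [List.getElem_take]
      have hπi : π i = l[(j+1) % l.length]'(by exact Nat.mod_lt _ (by omega)) := by
        have hil' : i ∈ (l.formPerm).support := by
          rw [hlsupp, List.mem_toFinset, hil]; exact List.getElem_mem _
        rw [← (hlp'.2 i hil'), hil, List.formPerm_apply_getElem _ hnd j hjl]
      rcases Nat.lt_or_ge (j+1) t with hc | hc
      · -- j+1 < t : agreement, i ≠ yt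
        have h1 : (j+1) % t = j+1 := Nat.mod_eq_of_lt hc
        have h2 : (j+1) % l.length = j+1 := Nat.mod_eq_of_lt (by omega)
        have heq : σ i = π i := by
          rw [hσi, hπi]
          exact (hnd.getElem_inj_iff).mpr (by omega)
        have hne : i ≠ yt := by
          rw [hil, hyt]
          intro h
          have := (hnd.getElem_inj_iff).mp h
          omega
        simp [heq, hne]
      · -- j = t-1 : disagreement, i = yt
        have hjt : j + 1 = t := by omega
        have h1 : (j+1) % t = 0 := by rw [hjt, Nat.mod_self]
        have h2 : (j+1) % l.length = t := by
          rw [hjt]; exact Nat.mod_eq_of_lt (by omega)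
        have hie : i = yt := by
          rw [hil, hyt]
          exact (hnd.getElem_inj_iff).mpr (by omega)
        have hne : ¬ σ i = π i := by
          intro h
          rw [hσi, hπi] at h
          have := (hnd.getElem_inj_iff).mp h
          omega
        subst hie
        simp [hne]
    · -- i not in the special cycle
      have hcyc : σ.cycleOf i ∈ σ.cycleFactorsFinset :=
        Equiv.Perm.cycleOf_mem_cycleFactorsFinset_iff.mpr hi
      have hicyc : i ∈ (σ.cycleOf i).support :=
        Equiv.Perm.mem_support_cycleOf_iff.mpr ⟨Equiv.Perm.SameCycle.refl _ _, hi⟩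
      have hne : σ.cycleOf i ≠ (l.take t).formPerm := by
        intro h; rw [h] at hicyc; exact hiL hicyc
      have hmem := hrest _ hcyc hne
      have := (Equiv.Perm.mem_cycleFactorsFinset_iff.mp hmem).2 i hicyc
      rw [Equiv.Perm.cycleOf_apply_self] at this
      have hine : i ≠ yt := fun h => hiL (h ▸ hytc0)
      simp [this, hine]
  -- conclude
  have hfe : (σ.support.filter fun i => σ i = π i) = σ.support.erase yt := by
    ext i
    simp only [Finset.mem_filter, Finset.mem_erase]
    constructor
    · rintro ⟨hi, hagree⟩
      exact ⟨(hiff i hi).mp hagree, hi⟩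
    · rintro ⟨hne, hi⟩
      exact ⟨hi, (hiff i hi).mpr hne⟩
  rw [hfe, Finset.card_erase_of_mem hyts, hσ]

theorem aux_fwd (n r : ℕ) (hr : 2 ≤ r)
    (π : Equiv.Perm (Fin n))
    (σ : Equiv.Perm (Fin n)) (hσ : σ.support.card = r)
    (hcard : (σ.support.filter fun i => σ i = π i).card = r - 1) :
    ∃ (t s : ℕ) (l : List (Fin n)), 2 ≤ t ∧ 1 ≤ s ∧ l.Nodup ∧ l.length = t + s ∧
        (l.take t).formPerm ∈ σ.cycleFactorsFinset ∧
        l.formPerm ∈ π.cycleFactorsFinset ∧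
        ∀ c ∈ σ.cycleFactorsFinset, c ≠ (l.take t).formPerm →
          c ∈ π.cycleFactorsFinset := by
  classical
  -- there is a unique disagreement point x
  have hpart := Finset.card_filter_add_card_filter_not
    (s := σ.support) (p := fun i => σ i = π i)
  rw [hσ, hcard] at hpart
  have hone : (σ.support.filter fun i => ¬ σ i = π i).card = 1 := by omega
  obtain ⟨x, hx⟩ := Finset.card_eq_one.mp hone
  have hxf : x ∈ σ.support.filter fun i => ¬ σ i = π i := by
    rw [hx]; exact Finset.mem_singleton_self x
  rw [Finset.mem_filter] at hxf
  obtain ⟨hxs, hxne⟩ := hxf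
  have hagree : ∀ i ∈ σ.support, i ≠ x → σ i = π i := by
    intro i hi hne
    by_contra h
    have : i ∈ σ.support.filter fun i => ¬ σ i = π i := Finset.mem_filter.mpr ⟨hi, h⟩
    rw [hx, Finset.mem_singleton] at this
    exact hne this
  set y : Fin n := σ x with hy
  have hyx : y ≠ x := by
    rw [hy]; intro h; exact (Equiv.Perm.mem_support.mp hxs) h
  have hys : y ∈ σ.support := Equiv.Perm.apply_mem_support.mpr hxs
  have hyσ : σ y ≠ y := Equiv.Perm.mem_support.mp hys
  have hyπne : π y ≠ y := by
    rw [← hagree y hys hyx]; exact hyσ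
  have hyπ : y ∈ π.support := Equiv.Perm.mem_support.mpr hyπne
  set t : ℕ := (σ.cycleOf y).support.card with hts
  set m : ℕ := (π.cycleOf y).support.card with hms
  have ht2 : 2 ≤ t := (Equiv.Perm.isCycle_cycleOf σ hyσ).two_le_card_support
  -- σ^t x = x and σ^(t-1) y = x
  have hcyx : σ.cycleOf y = σ.cycleOf x := by
    rw [hy]; exact Equiv.Perm.cycleOf_self_apply σ x
  have hstx : (σ ^ t) x = x := by
    have := Equiv.Perm.pow_mod_card_support_cycleOf_self_apply σ t x
    rw [← hcyx, ← hts, Nat.mod_self] at this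
    simpa using this.symm
  have ht' : t - 1 + 1 = t := by omega
  have hst1 : (σ ^ (t-1)) y = x := by
    have h5 : (σ ^ (t-1)) (σ x) = (σ ^ t) x := by
      calc (σ ^ (t-1)) (σ x) = ((σ ^ (t-1)) * σ) x := (Equiv.Perm.mul_apply _ _ _).symm
        _ = (σ ^ (t-1+1)) x := by rw [pow_succ]
        _ = (σ ^ t) x := by rw [ht']
    rw [hy, h5, hstx]
  -- σ^k y ≠ x for k < t - 1
  have hkx : ∀ k, k < t - 1 → (σ ^ k) y ≠ x := by
    intro k hk h
    have h1 : (σ.toList y).get ⟨k, by rw [Equiv.Perm.length_toList, ← hts]; omega⟩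
        = (σ.toList y).get ⟨t-1, by rw [Equiv.Perm.length_toList, ← hts]; omega⟩ := by
      rw [List.get_eq_getElem, List.get_eq_getElem, Equiv.Perm.getElem_toList, Equiv.Perm.getElem_toList, h, hst1]
    have := List.nodup_iff_injective_get.mp (Equiv.Perm.nodup_toList σ y) h1
    simp only [Fin.mk.injEq] at this
    omega
  -- π and σ agree on powers below t
  have h4 : ∀ k, k < t → (π ^ k) y = (σ ^ k) y := by
    intro k
    induction k with
    | zero => simp
    | succ k ih =>
      intro hk
      have hk' : k < t := by omega
      have hmem : (σ ^ k) y ∈ σ.support := Equiv.Perm.pow_apply_mem_support.mpr hys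
      have hne : (σ ^ k) y ≠ x := hkx k (by omega)
      calc (π ^ (k+1)) y = (π * π ^ k) y := by rw [pow_succ']
        _ = π ((π ^ k) y) := Equiv.Perm.mul_apply _ _ _
        _ = π ((σ ^ k) y) := by rw [ih hk']
        _ = σ ((σ ^ k) y) := (hagree _ hmem hne).symm
        _ = (σ * σ ^ k) y := (Equiv.Perm.mul_apply _ _ _).symm
        _ = (σ ^ (k+1)) y := by rw [← pow_succ']
  -- support inclusion
  have hsub : (σ.cycleOf y).support ⊆ (π.cycleOf y).support := by
    intro z hz
    have hsc : σ.SameCycle y z := (Equiv.Perm.mem_support_cycleOf_iff.mp hz).1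
    obtain ⟨i, hi, hiz⟩ := hsc.exists_pow_eq_of_mem_support hys
    rw [← hts] at hi
    have : (π ^ i) y = z := by rw [h4 i hi, hiz]
    exact Equiv.Perm.mem_support_cycleOf_iff.mpr ⟨⟨(i : ℤ), by simpa using this⟩, hyπ⟩
  -- π x not in σ-cycle support
  have hpxs : π x ∉ σ.support := by
    intro h
    have hw : σ⁻¹ (π x) ∈ σ.support := by
      rw [← Equiv.Perm.support_inv σ, Equiv.Perm.apply_mem_support,
        Equiv.Perm.support_inv]
      exact h
    by_cases hwx : σ⁻¹ (π x) = x
    · apply hxne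
      rw [hy]
      calc σ x = σ (σ⁻¹ (π x)) := by rw [hwx]
        _ = π x := by simp
    · have := hagree _ hw hwx
      have h2 : π (σ⁻¹ (π x)) = π x := by
        rw [← this]; simp
      exact hwx (π.injective h2)
  have hpxn : π x ∉ (σ.cycleOf y).support := fun h =>
    hpxs (Equiv.Perm.support_cycleOf_le σ y h)
  have hxπc : x ∈ (π.cycleOf y).support := by
    refine Equiv.Perm.mem_support_cycleOf_iff.mpr ⟨⟨((t:ℤ)-1), ?_⟩, hyπ⟩
    have : ((t:ℤ) - 1) = ((t-1 : ℕ) : ℤ) := by omega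
    rw [this, zpow_natCast, h4 (t-1) (by omega), hst1]
  have hpxπc : π x ∈ (π.cycleOf y).support := by
    have hsc := (Equiv.Perm.mem_support_cycleOf_iff.mp hxπc).1
    exact Equiv.Perm.mem_support_cycleOf_iff.mpr
      ⟨(Equiv.Perm.sameCycle_apply_right).mpr hsc, hyπ⟩
  have hlt : t < m := by
    rw [hts, hms]
    apply Finset.card_lt_card
    rw [Finset.ssubset_iff_of_subset hsub]
    exact ⟨π x, hpxπc, hpxn⟩
  -- the list
  refine ⟨t, m - t, π.toList y, ht2, by omega, Equiv.Perm.nodup_toList π y, ?_, ?_, ?_, ?_⟩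
  · rw [Equiv.Perm.length_toList, ← hms]; omega
  · -- take t is the σ-cycle
    have hteq : (π.toList y).take t = σ.toList y := by
      apply List.ext_get
      · rw [List.length_take, Equiv.Perm.length_toList, Equiv.Perm.length_toList,
          ← hms, ← hts]
        omega
      · intro i h1 h2
        rw [List.get_eq_getElem, List.get_eq_getElem, List.getElem_take]
        rw [Equiv.Perm.getElem_toList, Equiv.Perm.getElem_toList]
        have hit : i < t := by
          rw [Equiv.Perm.length_toList, ← hts] at h2
          exact h2
        exact h4 i hit
    rw [hteq, Equiv.Perm.formPerm_toList]
    exact Equiv.Perm.cycleOf_mem_cycleFactorsFinset_iff.mpr hys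
  · rw [Equiv.Perm.formPerm_toList]
    exact Equiv.Perm.cycleOf_mem_cycleFactorsFinset_iff.mpr hyπ
  · intro c hc hne
    have hteq : (π.toList y).take t = σ.toList y := by
      apply List.ext_get
      · rw [List.length_take, Equiv.Perm.length_toList, Equiv.Perm.length_toList,
          ← hms, ← hts]
        omega
      · intro i h1 h2
        rw [List.get_eq_getElem, List.get_eq_getElem, List.getElem_take]
        rw [Equiv.Perm.getElem_toList, Equiv.Perm.getElem_toList]
        have hit : i < t := by
          rw [Equiv.Perm.length_toList, ← hts] at h2
          exact h2
        exact h4 i hit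
    rw [hteq, Equiv.Perm.formPerm_toList] at hne
    obtain ⟨hcyc, hca⟩ := Equiv.Perm.mem_cycleFactorsFinset_iff.mp hc
    refine Equiv.Perm.mem_cycleFactorsFinset_iff.mpr ⟨hcyc, ?_⟩
    intro a ha
    have has : a ∈ σ.support := Equiv.Perm.mem_cycleFactorsFinset_support_le hc ha
    by_cases hax : a = x
    · exfalso
      apply hne
      rw [Equiv.Perm.cycle_is_cycleOf (hax ▸ ha) hc]
      exact hcyx.symm
    · rw [hca a ha]
      exact hagree a has hax



/-- Let `r ≥ 2`, `n ≥ 2r - 1`, `π` a permutation of `Fin n` with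
`|support π| = 2r - 1`, and `σ` a permutation with `|support σ| = r`. Then `σ` agrees
with `π` on exactly `r - 1` points of its support (i.e. `σ ∈ N_3(π)`) if and only if
there exist `t ≥ 2`, `s ≥ 1` and a list `l = [y_1, …, y_{t+s}]` of pairwise distinct
elements such that the cycle `(y_1 … y_t)` (i.e. `(l.take t).formPerm`) belongs to the
disjoint-cycle factorization of `σ`, the cycle `(y_1 … y_{t+s})` (i.e. `l.formPerm`)
belongs to the disjoint-cycle factorization of `π`, and every other cycle of `σ` also
belongs to the disjoint-cycle factorization of `π`. -/
theorem stmt13 (n r : ℕ) (hr : 2 ≤ r) (hn : 2 * r - 1 ≤ n)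
    (π : Equiv.Perm (Fin n)) (hπ : π.support.card = 2 * r - 1)
    (σ : Equiv.Perm (Fin n)) (hσ : σ.support.card = r) :
    (σ.support.filter fun i => σ i = π i).card = r - 1 ↔
      ∃ (t s : ℕ) (l : List (Fin n)), 2 ≤ t ∧ 1 ≤ s ∧ l.Nodup ∧ l.length = t + s ∧
        (l.take t).formPerm ∈ σ.cycleFactorsFinset ∧
        l.formPerm ∈ π.cycleFactorsFinset ∧
        ∀ c ∈ σ.cycleFactorsFinset, c ≠ (l.take t).formPerm →
          c ∈ π.cycleFactorsFinset := by
  constructor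
  · exact aux_fwd n r hr π σ hσ
  · rintro ⟨t, s, l, ht, hs, hnd, hlen, hc0, hlp, hrest⟩
    exact aux_bwd n r hr π σ hσ t s l ht hs hnd hlen hc0 hlp hrest
end
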